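/- arXiv:1906.01812 — 9 statements merged into one kernel-verified Lean document; each statement's English description precedes it below -/
import Mathlib

section
/- For integers r ≥ t ≥ 2 and positive integers n1, …, nr, the maximum number of edges of a K_t-free subgraph of the complete r-partite graph K_{n1,…,nr} equals the maximum, over all partitions 𝒫 of {1,…,r} into t−1 parts, of Σ_{I ≠ I' ∈ 𝒫} n_I · n_{I'}, where n_I = Σ_{i∈I} n_i and the sum is over unordered pairs of distinct parts of 𝒫. -/
/-!
Averaging over the `∏ nᵢ` transversals (one vertex from each part), a `K_t`-free
`G ≤ K_{n₁,…,n_r}` has a transversal whose induced graph `H` on `{1,…,r}` satisfies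
`2 e(G) ≤ Σ_{i ~_H i'} nᵢ nᵢ'`, and `H` is still `K_t`-free. A weighted Turán theorem bounds
the right-hand side by the weight `Σ_{P i ≠ P i'} nᵢ nᵢ'` of some `(t-1)`-colouring `P` of
`{1,…,r}`: pick a vertex of maximal weighted degree, colour its non-neighbours with a new colour
and recurse on its neighbourhood, which is `K_{t-1}`-free. Splitting colour classes only
increases the weight, so `P` may be taken surjective, i.e. a partition into `t - 1` parts.
Conversely, the blow-up of a partition is a `K_t`-free subgraph with exactly that many edges.
-/

open Finset

theorem Finset.sum_sum_eq_of_subset {α M : Type*} [DecidableEq α] [AddCommMonoid M]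
    {A' A : Finset α} (h : A' ⊆ A) (f : α → α → M) :
    ∑ u ∈ A, ∑ v ∈ A, f u v =
      ∑ u ∈ A', ∑ v ∈ A', f u v + ∑ u ∈ A', ∑ v ∈ A \ A', f u v +
        ∑ u ∈ A \ A', ∑ v ∈ A, f u v := by
  rw [← sum_sdiff h, add_comm, ← sum_add_distrib]
  congr 1
  exact sum_congr rfl fun u _ => by rw [← sum_sdiff h, add_comm]

open Classical in
theorem Finset.sum_sum_ite_mul_le {α : Type*} (p : α → α → Prop) (w : α → ℕ) (X Y : Finset α) :
    ∑ u ∈ X, ∑ v ∈ Y, (if p u v then w u * w v else 0) ≤ (∑ u ∈ X, w u) * ∑ v ∈ Y, w v := by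
  rw [sum_mul_sum]
  gcongr with u _ v _
  split_ifs <;> simp

theorem Finset.sum_mul_comp_eq_sum_fiberwise {ι κ : Type*} [Fintype ι] [Fintype κ]
    [DecidableEq κ] (n : ι → ℕ) (P : ι → κ) (φ : κ → ℕ) :
    ∑ i, n i * φ (P i) = ∑ j, (∑ i with P i = j, n i) * φ j := by
  rw [← sum_fiberwise univ P]
  refine sum_congr rfl fun j _ => ?_
  rw [sum_mul]
  exact sum_congr rfl fun i hi => by rw [(mem_filter.1 hi).2]

namespace Fintype

variable {ι M : Type*} [Fintype ι] [DecidableEq ι] {α : ι → Type*} [∀ i, Fintype (α i)]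
  [AddCommMonoid M]

theorem card_smul_sum_apply (j : ι) (f : α j → M) :
    card (α j) • ∑ x : ∀ i, α i, f (x j) = card (∀ i, α i) • ∑ a, f a := by
  let e := Equiv.piSplitAt j α
  have hsum : ∑ x : ∀ i, α i, f (x j) = card (∀ k : {k // k ≠ j}, α k) • ∑ a, f a := by
    rw [← e.symm.sum_comp, sum_prod_type, smul_sum]
    simp [e]
  rw [hsum, card_congr e, card_prod, smul_smul]

theorem card_smul_card_smul_sum_apply_apply {i i' : ι} (h : i ≠ i') (g : α i → α i' → M) :
    card (α i) • card (α i') • ∑ x : ∀ k, α k, g (x i) (x i') =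
      card (∀ k, α k) • ∑ a, ∑ b, g a b := by
  let e := Equiv.piSplitAt i α
  have hsum : card (α i') • ∑ x : ∀ k, α k, g (x i) (x i') =
      card (∀ k : {k // k ≠ i}, α k) • ∑ a, ∑ b, g a b := by
    rw [← e.symm.sum_comp, sum_prod_type, smul_sum, smul_sum]
    refine Finset.sum_congr rfl fun a _ => ?_
    simp only [e, Equiv.piSplitAt_symm_apply, dif_pos, dif_neg h.symm]
    exact card_smul_sum_apply (α := fun k : {k // k ≠ i} => α k) ⟨i', h.symm⟩ (g a)
  rw [hsum, card_congr e, card_prod, smul_smul]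

end Fintype

theorem Function.exists_surjective_refinement {α β : Type*} [Fintype α] [Fintype β]
    [DecidableEq β] (h : Fintype.card β ≤ Fintype.card α) (f : α → β) :
    ∃ g : α → β, Surjective g ∧ ∀ a b, f a ≠ f b → g a ≠ g b := by
  classical
  by_cases hf : Surjective f
  · exact ⟨f, hf, fun _ _ => id⟩
  obtain ⟨j, hj⟩ : ∃ j, ∀ a, f a ≠ j := by simpa [Surjective] using hf
  have hjf : j ∉ univ.image f := by simpa using hj
  obtain ⟨a, -, b, -, hne, hab⟩ := exists_ne_map_eq_of_card_lt_of_maps_to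
    ((card_lt_univ_of_notMem hjf).trans_le h) fun a _ => mem_image_of_mem f (mem_univ a)
  -- As `f a = f b`, recolouring `a` by the missing colour `j` keeps every colour of `f`.
  let g := update f a j
  have hrefine (c d : α) (hcd : f c ≠ f d) : g c ≠ g d := by
    by_cases hc : c = a <;> by_cases hd : d = a
    · exact absurd (by rw [hc, hd]) hcd
    · subst hc; simpa [g, hd] using (hj d).symm
    · subst hd; simpa [g, hc] using hj c
    · simpa [g, hc, hd] using hcd
  have hfg : univ.image f ⊆ univ.image g := by
    intro y hy
    obtain ⟨c, -, rfl⟩ := mem_image.1 hy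
    rcases eq_or_ne c a with rfl | hc
    · exact mem_image.2 ⟨b, mem_univ _, by simp [g, hne.symm, hab]⟩
    · exact mem_image.2 ⟨c, mem_univ _, by simp [g, hc]⟩
  have : #(univ \ univ.image g) < #(univ \ univ.image f) := by
    refine card_lt_card <| (ssubset_iff_of_subset (sdiff_subset_sdiff subset_rfl hfg)).2 ?_
    exact ⟨j, by simpa using hj, by simpa using ⟨a, by simp [g]⟩⟩
  obtain ⟨g', hg', hrefine'⟩ := exists_surjective_refinement h g
  exact ⟨g', hg', fun c d hcd => hrefine' c d (hrefine c d hcd)⟩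
termination_by #(univ \ univ.image f)

namespace SimpleGraph

variable {V : Type*}

open Classical in
noncomputable def weightedAdjSum (G : SimpleGraph V) (w : V → ℕ) (A : Finset V) : ℕ :=
  ∑ u ∈ A, ∑ v ∈ A, if G.Adj u v then w u * w v else 0

theorem weightedAdjSum_mono {G H : SimpleGraph V} (h : G ≤ H) (w : V → ℕ) (A : Finset V) :
    G.weightedAdjSum w A ≤ H.weightedAdjSum w A := by
  unfold weightedAdjSum
  gcongr with u _ v _
  split_ifs with hG hH
  exacts [le_rfl, absurd (h hG) hH, Nat.zero_le _, le_rfl]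

theorem weightedAdjSum_one_univ [Fintype V] (G : SimpleGraph V) :
    G.weightedAdjSum 1 univ = 2 * G.edgeSet.ncard := by
  classical
  unfold weightedAdjSum
  simp only [Pi.one_apply, mul_one, sum_boole, Nat.cast_id, ← neighborFinset_eq_filter,
    card_neighborFinset_eq_degree, sum_degrees_eq_twice_card_edges, edgeFinset,
    Set.ncard_eq_toFinset_card']

theorem weightedAdjSum_comap_univ [Fintype V] {W : Type*} [Fintype W] [DecidableEq W]
    (H : SimpleGraph W) (P : V → W) (w : V → ℕ) :
    (H.comap P).weightedAdjSum w univ =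
      H.weightedAdjSum (fun j => ∑ i with P i = j, w i) univ := by
  classical
  have hite (a b : ℕ) (c : Prop) [Decidable c] :
      (if c then a * b else 0) = a * (b * if c then 1 else 0) := by
    split_ifs <;> simp
  have hfiber (j : W) : ∑ v, w v * (if H.Adj j (P v) then 1 else 0) =
      ∑ j', (∑ i with P i = j', w i) * if H.Adj j j' then 1 else 0 :=
    sum_mul_comp_eq_sum_fiberwise w P fun j' => if H.Adj j j' then 1 else 0
  unfold weightedAdjSum
  simp only [comap_adj, hite, ← mul_sum, hfiber]
  exact sum_mul_comp_eq_sum_fiberwise w P fun j =>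
    ∑ j', (∑ i with P i = j', w i) * if H.Adj j j' then 1 else 0

theorem weightedAdjSum_top_univ [Fintype V] [LinearOrder V] (w : V → ℕ) :
    (⊤ : SimpleGraph V).weightedAdjSum w univ =
      2 * ∑ j, ∑ j', if j < j' then w j * w j' else 0 := by
  have hsplit (j j' : V) : (if j ≠ j' then w j * w j' else 0) =
      (if j < j' then w j * w j' else 0) + if j' < j then w j' * w j else 0 := by
    rcases lt_trichotomy j j' with h | rfl | h
    · simp [h, h.ne, h.not_gt]
    · simp
    · simp [h, h.ne', h.not_gt, mul_comm]
  unfold weightedAdjSum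
  simp only [top_adj, hsplit, sum_add_distrib]
  rw [sum_comm (f := fun j j' => if j' < j then w j' * w j else 0)]
  ring

section WeightedTuran

open Classical in
noncomputable def weightedDegree (G : SimpleGraph V) (w : V → ℕ) (A : Finset V) (u : V) : ℕ :=
  ∑ z ∈ A, if G.Adj u z then w z else 0

variable [DecidableEq V] {G : SimpleGraph V} {w : V → ℕ}

open Classical in
theorem weightedAdjSum_le_of_forall_weightedDegree_le {A : Finset V} {v : V}
    (hv : ∀ u ∈ A, G.weightedDegree w A u ≤ G.weightedDegree w A v) :
    G.weightedAdjSum w A ≤ G.weightedAdjSum w (A.filter (G.Adj v)) +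
      2 * (∑ u ∈ A.filter (G.Adj v), w u) * ∑ u ∈ A \ A.filter (G.Adj v), w u := by
  set A' := A.filter (G.Adj v)
  have hdeg (u : V) : ∑ z ∈ A, (if G.Adj u z then w u * w z else 0) =
      w u * G.weightedDegree w A u := by
    rw [weightedDegree, mul_sum]; exact sum_congr rfl fun z _ => by split_ifs <;> simp
  have hB : ∑ u ∈ A \ A', ∑ z ∈ A, (if G.Adj u z then w u * w z else 0) ≤
      (∑ u ∈ A \ A', w u) * ∑ u ∈ A', w u := by
    rw [sum_mul]
    gcongr with u hu
    rw [hdeg, sum_filter, ← weightedDegree]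
    exact Nat.mul_le_mul_left _ (hv u (mem_sdiff.1 hu).1)
  have hA'B := sum_sum_ite_mul_le G.Adj w A' (A \ A')
  unfold weightedAdjSum
  rw [sum_sum_eq_of_subset (filter_subset (G.Adj v) A)]
  linarith

theorem add_le_weightedAdjSum_comap_top {β γ : Type*} {A' A : Finset V} (hA : A' ⊆ A)
    {P : V → β} {Q : V → γ} (hPQ : ∀ u ∈ A', ∀ v ∈ A', Q u ≠ Q v → P u ≠ P v)
    (hsep : ∀ u ∈ A', ∀ v ∈ A \ A', P u ≠ P v) :
    ((⊤ : SimpleGraph γ).comap Q).weightedAdjSum w A' +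
        2 * (∑ u ∈ A', w u) * ∑ u ∈ A \ A', w u ≤
      ((⊤ : SimpleGraph β).comap P).weightedAdjSum w A := by
  classical
  have hcross : ∑ u ∈ A', ∑ v ∈ A \ A', (if P u ≠ P v then w u * w v else 0) =
      (∑ u ∈ A', w u) * ∑ u ∈ A \ A', w u := by
    rw [sum_mul_sum]
    exact sum_congr rfl fun u hu => sum_congr rfl fun v hv => if_pos (hsep u hu v hv)
  have hcross' : (∑ u ∈ A \ A', w u) * ∑ u ∈ A', w u ≤
      ∑ u ∈ A \ A', ∑ v ∈ A, (if P u ≠ P v then w u * w v else 0) := by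
    rw [sum_mul_sum]
    gcongr with u hu
    calc ∑ v ∈ A', w u * w v
        = ∑ v ∈ A', (if P u ≠ P v then w u * w v else 0) :=
          sum_congr rfl fun v hv => (if_pos (hsep v hv u hu).symm).symm
      _ ≤ _ := sum_le_sum_of_subset hA
  have hinner : ∑ u ∈ A', ∑ v ∈ A', (if Q u ≠ Q v then w u * w v else 0) ≤
      ∑ u ∈ A', ∑ v ∈ A', (if P u ≠ P v then w u * w v else 0) := by
    gcongr with u hu v hv
    by_cases hQ : Q u ≠ Q v
    · rw [if_pos hQ, if_pos (hPQ u hu v hv hQ)]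
    · rw [if_neg hQ]; exact Nat.zero_le _
  unfold weightedAdjSum
  simp only [comap_adj, top_adj]
  rw [sum_sum_eq_of_subset hA]
  linarith

theorem exists_weightedAdjSum_le_comap_top_of_cliqueFreeOn (w : V → ℕ) (s : ℕ) (A : Finset V)
    (h : G.CliqueFreeOn A (s + 2)) :
    ∃ P : V → Fin (s + 1),
      G.weightedAdjSum w A ≤ ((⊤ : SimpleGraph _).comap P).weightedAdjSum w A := by
  classical
  induction s generalizing A with
  | zero =>
    refine ⟨0, le_of_eq_of_le ?_ (Nat.zero_le _)⟩
    refine sum_eq_zero fun u hu => sum_eq_zero fun v hv => if_neg fun huv => ?_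
    exact (cliqueFreeOn_two G).1 h hu hv (G.ne_of_adj huv) huv
  | succ s ih =>
    obtain rfl | hA := A.eq_empty_or_nonempty
    · exact ⟨0, by simp [weightedAdjSum]⟩
    obtain ⟨v, hvA, hv⟩ := exists_max_image A (G.weightedDegree w A) hA
    set A' := A.filter (G.Adj v)
    obtain ⟨Q, hQ⟩ := ih A' <| (h.of_succ G hvA).subset G fun x hx => by simpa [A'] using hx
    refine ⟨fun u => if u ∈ A' then (Q u).castSucc else Fin.last (s + 1), ?_⟩
    calc G.weightedAdjSum w A
        ≤ G.weightedAdjSum w A' + 2 * (∑ u ∈ A', w u) * ∑ u ∈ A \ A', w u :=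
          weightedAdjSum_le_of_forall_weightedDegree_le hv
      _ ≤ ((⊤ : SimpleGraph _).comap Q).weightedAdjSum w A' +
            2 * (∑ u ∈ A', w u) * ∑ u ∈ A \ A', w u := by gcongr
      _ ≤ _ := add_le_weightedAdjSum_comap_top (filter_subset _ _)
          (fun u hu v hv hQ => by rwa [if_pos hu, if_pos hv, ne_eq, Fin.castSucc_inj])
          (fun u hu v hv => by
            rw [if_pos hu, if_neg (mem_sdiff.1 hv).2]; exact Fin.castSucc_ne_last _)

end WeightedTuran

section Multipartite

variable {ι : Type*} [Fintype ι] [DecidableEq ι] {α : ι → Type*} [∀ i, Fintype (α i)]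

theorem two_mul_ncard_edgeSet_comap_sigmaFst (H : SimpleGraph ι) :
    2 * (H.comap (Sigma.fst : (Σ i, α i) → ι)).edgeSet.ncard =
      H.weightedAdjSum (fun i => Fintype.card (α i)) univ := by
  rw [← weightedAdjSum_one_univ, weightedAdjSum_comap_univ]
  congr! with i
  rw [sum_filter, Fintype.sum_sigma]
  simp

theorem exists_cliqueFree_two_mul_ncard_edgeSet_eq {s : ℕ} (P : ι → Fin (s + 1)) :
    ∃ G ≤ completeMultipartiteGraph α, G.CliqueFree (s + 2) ∧ 2 * G.edgeSet.ncard =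
      ((⊤ : SimpleGraph _).comap P).weightedAdjSum (fun i => Fintype.card (α i)) univ :=
  ⟨((⊤ : SimpleGraph _).comap P).comap Sigma.fst, fun _ _ h => ne_of_apply_ne P h,
    Colorable.cliqueFree ⟨Coloring.mk (fun u => P u.1) fun h => h⟩ (by omega),
    two_mul_ncard_edgeSet_comap_sigmaFst _⟩

theorem sum_weightedAdjSum_comap_sigmaMk {G : SimpleGraph (Σ i, α i)}
    (hG : G ≤ completeMultipartiteGraph α) :
    ∑ x : ∀ i, α i,
        (G.comap fun i => ⟨i, x i⟩).weightedAdjSum (fun i => Fintype.card (α i)) univ =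
      Fintype.card (∀ i, α i) * G.weightedAdjSum 1 univ := by
  classical
  have hpair (i j : ι) : ∑ x : ∀ i, α i,
      (if G.Adj ⟨i, x i⟩ ⟨j, x j⟩ then Fintype.card (α i) * Fintype.card (α j) else 0) =
      Fintype.card (∀ i, α i) * ∑ a, ∑ b, if G.Adj ⟨i, a⟩ ⟨j, b⟩ then 1 else 0 := by
    by_cases hij : i = j
    · subst hij
      have hno (a b : α i) : ¬ G.Adj ⟨i, a⟩ ⟨i, b⟩ := fun h => hG h rfl
      simp [hno]
    · have := Fintype.card_smul_card_smul_sum_apply_apply hij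
        fun a b => if G.Adj ⟨i, a⟩ ⟨j, b⟩ then 1 else 0
      simp only [smul_eq_mul] at this
      rw [← this, mul_sum, mul_sum]
      simp [mul_ite]
  unfold weightedAdjSum
  simp only [comap_adj, Fintype.sum_sigma, Pi.one_apply, mul_one]
  calc _ = ∑ i, ∑ j, ∑ x : ∀ i, α i,
        (if G.Adj ⟨i, x i⟩ ⟨j, x j⟩ then Fintype.card (α i) * Fintype.card (α j) else 0) := by
        rw [sum_comm]; exact sum_congr rfl fun i _ => sum_comm
    _ = _ := by
        simp only [hpair, mul_sum]
        exact sum_congr rfl fun i _ => sum_comm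

theorem exists_surjective_two_mul_ncard_edgeSet_le [∀ i, Nonempty (α i)]
    {G : SimpleGraph (Σ i, α i)} (hG : G ≤ completeMultipartiteGraph α) {s : ℕ}
    (hcf : G.CliqueFree (s + 2)) (hs : s + 1 ≤ Fintype.card ι) :
    ∃ P : ι → Fin (s + 1), Function.Surjective P ∧ 2 * G.edgeSet.ncard ≤
      ((⊤ : SimpleGraph _).comap P).weightedAdjSum (fun i => Fintype.card (α i)) univ := by
  obtain ⟨x, -, hx⟩ := exists_le_of_sum_le univ_nonempty <| ge_of_eq <|
    (sum_weightedAdjSum_comap_sigmaMk hG).trans (by simp : _ = ∑ _x, G.weightedAdjSum 1 univ)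
  let σ : ι ↪ Σ i, α i := ⟨fun i => ⟨i, x i⟩, fun i i' h => congrArg Sigma.fst h⟩
  have hcfσ : (G.comap σ).CliqueFree (s + 2) := hcf.comap (Embedding.comap σ G).isContained
  obtain ⟨P, hP⟩ := exists_weightedAdjSum_le_comap_top_of_cliqueFreeOn
    (fun i => Fintype.card (α i)) s univ hcfσ.cliqueFreeOn
  obtain ⟨P', hP', hPP'⟩ := Function.exists_surjective_refinement (by simpa using hs) P
  refine ⟨P', hP', (weightedAdjSum_one_univ G).symm.le.trans (hx.trans (hP.trans ?_))⟩
  exact weightedAdjSum_mono (G := (⊤ : SimpleGraph _).comap P)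
    (H := (⊤ : SimpleGraph _).comap P') hPP' _ _

end Multipartite

end SimpleGraph

open SimpleGraph in
theorem turan_number_rpartite_Kt
    (r t : ℕ) (ht : 2 ≤ t) (htr : t ≤ r) (n : Fin r → ℕ) (hn : ∀ i, 1 ≤ n i) :
    IsGreatest
      {m : ℕ | ∃ G : SimpleGraph (Σ i : Fin r, Fin (n i)),
        G ≤ SimpleGraph.completeMultipartiteGraph (fun i : Fin r => Fin (n i)) ∧
        G.CliqueFree t ∧ G.edgeSet.ncard = m}
      (sSup {m : ℕ | ∃ P : Fin r → Fin (t - 1), Function.Surjective P ∧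
        m = ∑ j : Fin (t - 1), ∑ j' : Fin (t - 1),
          if j < j' then
            (∑ i ∈ Finset.univ.filter (fun i => P i = j), n i) *
            (∑ i ∈ Finset.univ.filter (fun i => P i = j'), n i)
          else 0}) := by
  obtain ⟨s, rfl⟩ : ∃ s, t = s + 2 := ⟨t - 2, by omega⟩
  have (i : Fin r) : Nonempty (Fin (n i)) := Fin.pos_iff_nonempty.1 (hn i)
  let value (P : Fin r → Fin (s + 1)) : ℕ := ∑ j, ∑ j', if j < j' then
    (∑ i with P i = j, n i) * (∑ i with P i = j', n i) else 0
  have hvalue (P : Fin r → Fin (s + 1)) :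
      ((⊤ : SimpleGraph _).comap P).weightedAdjSum n univ = 2 * value P := by
    rw [weightedAdjSum_comap_univ, weightedAdjSum_top_univ]
  have hcard : s + 1 ≤ Fintype.card (Fin r) := by rw [Fintype.card_fin]; omega
  obtain ⟨P₀, hP₀, hmax⟩ := exists_max_image (univ.filter Function.Surjective) value
    ⟨_, mem_filter.2 ⟨mem_univ _,
      (Function.exists_surjective_refinement (by simpa using hcard) 0).choose_spec.1⟩⟩
  simp only [mem_filter, mem_univ, true_and] at hP₀ hmax
  have hsup : IsGreatest {m | ∃ P, Function.Surjective P ∧ m = value P} (value P₀) :=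
    ⟨⟨P₀, hP₀, rfl⟩, by rintro _ ⟨P, hP, rfl⟩; exact hmax P hP⟩
  change IsGreatest _ (sSup {m | ∃ P, Function.Surjective P ∧ m = value P})
  rw [hsup.csSup_eq]
  refine ⟨?_, ?_⟩
  · obtain ⟨G, hG, hcf, hedges⟩ := exists_cliqueFree_two_mul_ncard_edgeSet_eq
      (α := fun i => Fin (n i)) P₀
    simp only [Fintype.card_fin, hvalue] at hedges
    exact ⟨G, hG, hcf, by omega⟩
  · rintro _ ⟨G, hG, hcf, rfl⟩
    obtain ⟨P, hP, hedges⟩ := exists_surjective_two_mul_ncard_edgeSet_le hG hcf hcard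
    simp only [Fintype.card_fin, hvalue] at hedges
    have := hmax P hP
    omega
end

section
/- Let G be a 4-partite graph with parts V1, V2, V3, V4 of sizes n1, n2, n3, n4, and let x ∈ V1 and y ∈ V2. If x and y have no common neighbor and d(x) + d(y) = n1 + n2 + n3 + n4, then xy is an edge of G, every vertex of V2 is adjacent to x, and every vertex of V1 is adjacent to y. -/
/-!
The neighbourhoods of `x` and `y` are disjoint, and since the parts cover `V` their sizes add up
to at least `|V|`; hence every vertex is adjacent to `x` or to `y`. A vertex of `V2` cannot be
adjacent to `y ∈ V2`, so it is adjacent to `x`, and symmetrically for `V1`.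
-/

theorem Finset.card_univ_le_sum_card_of_forall_mem {ι V : Type*} [Fintype ι] [Fintype V]
    (s : ι → Finset V) (hcover : ∀ v, ∃ i, v ∈ s i) :
    Fintype.card V ≤ ∑ i, (s i).card := by
  classical
  calc Fintype.card V = (univ.biUnion s).card := by
        have hunion : univ.biUnion s = univ := eq_univ_of_forall fun v => by simpa using hcover v
        rw [← card_univ, hunion]
    _ ≤ ∑ i, (s i).card := card_biUnion_le

namespace SimpleGraph

variable {V : Type*} [Fintype V] (G : SimpleGraph V) [DecidableRel G.Adj]

theorem adj_or_adj_of_card_le_degree_add_degree {x y : V}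
    (hcom : ∀ z, ¬ (G.Adj x z ∧ G.Adj y z))
    (hdeg : Fintype.card V ≤ G.degree x + G.degree y) (v : V) :
    G.Adj x v ∨ G.Adj y v := by
  classical
  have hdisj : Disjoint (G.neighborFinset x) (G.neighborFinset y) :=
    Finset.disjoint_left.2 fun z hxz hyz => hcom z ⟨by simpa using hxz, by simpa using hyz⟩
  have hcard : Fintype.card V ≤ (G.neighborFinset x ∪ G.neighborFinset y).card := by
    rwa [Finset.card_union_of_disjoint hdisj,
      card_neighborFinset_eq_degree, card_neighborFinset_eq_degree]
  have hv : v ∈ G.neighborFinset x ∪ G.neighborFinset y := by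
    rw [Finset.eq_univ_of_card _ (le_antisymm (Finset.card_le_univ _) hcard)]
    exact Finset.mem_univ v
  simpa using hv

end SimpleGraph

theorem no_common_neighbor_degree_sum_eq_general
    (V : Type) [Fintype V]
    (G : SimpleGraph V) [DecidableRel G.Adj]
    (Vp : Fin 4 → Finset V) (n : Fin 4 → ℕ)
    (hcover : ∀ v : V, ∃ i, v ∈ Vp i)
    (hcard : ∀ i, (Vp i).card = n i)
    (hpartite : ∀ u v : V, G.Adj u v → ∀ i, u ∈ Vp i → v ∈ Vp i → False)
    (x y : V) (hx : x ∈ Vp 0) (hy : y ∈ Vp 1)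
    -- x and y have no common neighbor
    (hcom : ∀ z : V, ¬ (G.Adj x z ∧ G.Adj y z))
    (hdeg : G.degree x + G.degree y = n 0 + n 1 + n 2 + n 3) :
    G.Adj x y ∧ (∀ v ∈ Vp 1, G.Adj x v) ∧ (∀ v ∈ Vp 0, G.Adj y v) := by
  have hcardV : Fintype.card V ≤ G.degree x + G.degree y := by
    simpa [hdeg, hcard, Fin.sum_univ_four] using
      Finset.card_univ_le_sum_card_of_forall_mem Vp hcover
  have hall := G.adj_or_adj_of_card_le_degree_add_degree hcom hcardV
  have hxV1 : ∀ v ∈ Vp 1, G.Adj x v := fun v hv =>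
    (hall v).resolve_right fun hyv => hpartite y v hyv 1 hy hv
  have hyV0 : ∀ v ∈ Vp 0, G.Adj y v := fun v hv =>
    (hall v).resolve_left fun hxv => hpartite x v hxv 0 hx hv
  exact ⟨hxV1 y hy, hxV1, hyV0⟩

theorem no_common_neighbor_degree_sum_eq
    (V : Type) [Fintype V] [DecidableEq V]
    (G : SimpleGraph V) [DecidableRel G.Adj]
    (Vp : Fin 4 → Finset V) (n : Fin 4 → ℕ)
    (hdisj : ∀ i j : Fin 4, i ≠ j → Disjoint (Vp i) (Vp j))
    (hcover : ∀ v : V, ∃ i, v ∈ Vp i)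
    (hcard : ∀ i, (Vp i).card = n i)
    (hpartite : ∀ u v : V, G.Adj u v → ∀ i, u ∈ Vp i → v ∈ Vp i → False)
    (x y : V) (hx : x ∈ Vp 0) (hy : y ∈ Vp 1)
    -- x and y have no common neighbor
    (hcom : ∀ z : V, ¬ (G.Adj x z ∧ G.Adj y z))
    (hdeg : G.degree x + G.degree y = n 0 + n 1 + n 2 + n 3) :
    G.Adj x y ∧ (∀ v ∈ Vp 1, G.Adj x v) ∧ (∀ v ∈ Vp 0, G.Adj y v) :=
  no_common_neighbor_degree_sum_eq_general V G Vp n hcover hcard hpartite x y hx hy hcom hdeg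
end

section
/- (Progressive induction) For each n ∈ ℕ let 𝔄_n be a finite set, with 𝔄_n ∩ 𝔄_m = ∅ whenever n ≠ m, and let 𝔄 = ⋃_{n≥1} 𝔄_n. Let B be a property (predicate) on 𝔄 and let Δ : 𝔄 → ℕ be a function such that (a) Δ(a) = 0 whenever a satisfies B, and (b) there is an M0 such that for every n > M0 and every a ∈ 𝔄_n, either a satisfies B or there exist n' with n/2 < n' < n and a' ∈ 𝔄_{n'} such that Δ(a) < Δ(a'). Then there exists n0 such that for every n > n0, every a ∈ 𝔄_n satisfies B. -/
/-!
Let `K` bound `Δ` on the finitely many elements of `𝔄_1, …, 𝔄_{M0}`. Following the chain of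
witnesses from an `a ∈ 𝔄_n` failing `B`, `Δ` rises by at least one at each step while the index
shrinks by less than half, until the chain drops to an index `m ≤ M0` with `Δ ≤ K`. Hence
`n * 2 ^ Δ a < 2 ^ K * M0`, so `B` holds on every `𝔄_n` with `n > 2 ^ K * M0`.
-/

section ProgressiveInduction

variable {α : Type*} {A : ℕ → Set α} {B : α → Prop} {Δ : α → ℕ} {M0 K : ℕ}

theorem index_mul_two_pow_lt_of_not
    (hK : ∀ m ≤ M0, ∀ b ∈ A m, Δ b ≤ K)
    (ha : ∀ n, M0 < n → ∀ a ∈ A n, B a → Δ a = 0)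
    (hb : ∀ n, M0 < n → ∀ a ∈ A n,
      B a ∨ ∃ n' : ℕ, n < 2 * n' ∧ n' < n ∧ ∃ a' ∈ A n', Δ a < Δ a') :
    ∀ n, M0 < n → ∀ a ∈ A n, ¬ B a → n * 2 ^ Δ a < 2 ^ K * M0 := by
  intro n
  induction n using Nat.strong_induction_on with
  | _ n ih =>
    intro hn a haA hBa
    obtain hBa' | ⟨n', hn_lt, hn'_lt, a', ha'A, hΔ⟩ := hb n hn a haA
    · exact absurd hBa' hBa
    have step : n * 2 ^ Δ a < n' * 2 ^ Δ a' :=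
      calc n * 2 ^ Δ a < 2 * n' * 2 ^ Δ a := by gcongr
        _ = n' * 2 ^ (Δ a + 1) := by ring
        _ ≤ n' * 2 ^ Δ a' := by gcongr; exacts [one_le_two, hΔ]
    refine step.trans_le ?_
    by_cases hn' : n' ≤ M0
    · calc n' * 2 ^ Δ a' ≤ M0 * 2 ^ K := by
            gcongr
            exacts [one_le_two, hK n' hn' a' ha'A]
        _ = 2 ^ K * M0 := mul_comm _ _
    · have hBa' : ¬ B a' := fun h => by
        have := ha n' (by omega) a' ha'A h
        omega
      exact (ih n' hn'_lt (by omega) a' ha'A hBa').le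

end ProgressiveInduction

theorem progressive_induction_general
    (α : Type) (A : ℕ → Set α)
    (hfin : ∀ n : ℕ, (A n).Finite)
    (B : α → Prop) (Δ : α → ℕ)
    (ha : ∀ n : ℕ, 1 ≤ n → ∀ a ∈ A n, B a → Δ a = 0)
    (hb : ∃ M0 : ℕ, ∀ n : ℕ, M0 < n → ∀ a ∈ A n,
      B a ∨ ∃ n' : ℕ, n < 2 * n' ∧ n' < n ∧ ∃ a' ∈ A n', Δ a < Δ a') :
    ∃ n0 : ℕ, ∀ n : ℕ, n0 < n → ∀ a ∈ A n, B a := by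
  obtain ⟨M0, hM0⟩ := hb
  obtain ⟨K, hK⟩ : BddAbove (Δ '' ⋃ m ≤ M0, A m) :=
    (((Set.finite_le_nat M0).biUnion fun m _ => hfin m).image Δ).bddAbove
  have hK_le : ∀ m ≤ M0, ∀ b ∈ A m, Δ b ≤ K := fun m hm b hb =>
    hK ⟨b, Set.mem_biUnion hm hb, rfl⟩
  refine ⟨2 ^ K * M0, fun n hn a haA => by_contra fun hBa => ?_⟩
  have hM0n : M0 < n := (Nat.le_mul_of_pos_left M0 (by positivity)).trans_lt hn
  have := index_mul_two_pow_lt_of_not hK_le (fun n hn => ha n (by omega)) hM0 n hM0n a haA hBa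
  have := Nat.le_mul_of_pos_right n (Nat.two_pow_pos (Δ a))
  omega

theorem progressive_induction
    (α : Type) (A : ℕ → Set α)
    (hfin : ∀ n : ℕ, (A n).Finite)
    (hdisj : ∀ m n : ℕ, m ≠ n → Disjoint (A m) (A n))
    (B : α → Prop) (Δ : α → ℕ)
    (ha : ∀ n : ℕ, 1 ≤ n → ∀ a ∈ A n, B a → Δ a = 0)
    (hb : ∃ M0 : ℕ, ∀ n : ℕ, M0 < n → ∀ a ∈ A n,
      B a ∨ ∃ n' : ℕ, n < 2 * n' ∧ n' < n ∧ ∃ a' ∈ A n', Δ a < Δ a') :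
    ∃ n0 : ℕ, ∀ n : ℕ, n0 < n → ∀ a ∈ A n, B a :=
  progressive_induction_general α A hfin B Δ ha hb
end

section
/- Let k ≥ 1 and n1 ≥ n2 ≥ n3 ≥ n4 ≥ k be integers, and let V1, V2, V3, V4 be disjoint sets with |Vi| = ni. Fix a set Z ⊆ V4 with |Z| = k−1, and let G1 be the 4-partite graph consisting of all edges between V1 ∪ V4 and V2 ∪ V3 together with all edges between Z and V1. Then G1 contains no k pairwise vertex-disjoint triangles, and e(G1) = (n1+n4)(n2+n3) + (k−1)n1. -/
/-!
Here `Vp 0, Vp 1, Vp 2, Vp 3` play the roles of V1, V2, V3, V4.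

Away from Z the graph G1 is bipartite with sides V1 ∪ V4 and V2 ∪ V3, so every triangle
contains a vertex of Z; pairwise disjoint triangles contain distinct vertices of Z, hence there
are at most |Z| = k − 1 of them. The edges of G1 are those of the complete bipartite graphs
between V1 ∪ V4 and V2 ∪ V3 and between Z and V1, and these two edge sets are disjoint because
every edge of the first has an end in V2 ∪ V3 while Z ∪ V1 ⊆ V1 ∪ V4.
-/

open Finset

variable {V : Type*}

theorem SimpleGraph.IsNClique.inter_nonempty_of_bipartite_off [DecidableEq V]
    {G : SimpleGraph V} {Z : Finset V} {A : Set V}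
    (hA : ∀ u v, G.Adj u v → u ∉ Z → v ∉ Z → (u ∈ A ↔ v ∉ A)) {T : Finset V}
    (hT : G.IsNClique 3 T) : (T ∩ Z).Nonempty := by
  obtain ⟨a, b, c, hab, hac, hbc, rfl⟩ := is3Clique_iff.mp hT
  by_contra hTZ
  have hout : ∀ x ∈ ({a, b, c} : Finset V), x ∉ Z := fun x hx hxZ =>
    hTZ ⟨x, mem_inter.mpr ⟨hx, hxZ⟩⟩
  have hab' := hA a b hab (hout a (by simp)) (hout b (by simp))
  have hac' := hA a c hac (hout a (by simp)) (hout c (by simp))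
  have hbc' := hA b c hbc (hout b (by simp)) (hout c (by simp))
  tauto

theorem Finset.card_le_card_of_pairwise_disjoint_of_inter_nonempty [DecidableEq V]
    {S : Finset (Finset V)} {Z : Finset V} (hS : (S : Set (Finset V)).Pairwise Disjoint)
    (hSZ : ∀ T ∈ S, (T ∩ Z).Nonempty) : #S ≤ #Z :=
  calc #S = ∑ _T ∈ S, 1 := card_eq_sum_ones S
    _ ≤ ∑ T ∈ S, #(T ∩ Z) := sum_le_sum fun T hT => (hSZ T hT).card_pos
    _ = #(S.biUnion (· ∩ Z)) :=
      (card_biUnion fun _ hT _ hT' hne =>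
        (hS hT hT' hne).mono inter_subset_left inter_subset_left).symm
    _ ≤ #Z := card_le_card (biUnion_subset.mpr fun _ _ => inter_subset_right)

theorem SimpleGraph.edgeSet_eq_image_mk {G : SimpleGraph V} {R : Set (V × V)}
    (hG : ∀ u v, G.Adj u v ↔ (u, v) ∈ R ∨ (v, u) ∈ R) :
    G.edgeSet = (fun p : V × V => s(p.1, p.2)) '' R := by
  ext e
  induction e using Sym2.ind with
  | _ u v =>
    simp only [mem_edgeSet, hG, Set.mem_image, Prod.exists]
    constructor
    · rintro (h | h)
      · exact ⟨u, v, h, rfl⟩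
      · exact ⟨v, u, h, Sym2.eq_swap⟩
    · rintro ⟨a, b, h, he⟩
      rcases Sym2.eq_iff.mp he with ⟨rfl, rfl⟩ | ⟨rfl, rfl⟩
      · exact Or.inl h
      · exact Or.inr h

theorem Finset.card_image_mk_product [DecidableEq V] {X Y : Finset V} (h : Disjoint X Y) :
    #((X ×ˢ Y).image fun p => s(p.1, p.2)) = #X * #Y := by
  rw [card_image_of_injOn, card_product]
  rintro ⟨a, b⟩ hp ⟨c, d⟩ hq he
  simp only [coe_product, Set.mem_prod, mem_coe] at hp hq
  rcases Sym2.mk_eq_mk_iff.mp he with h' | h'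
  · exact h'
  · simp only [Prod.swap_prod_mk, Prod.mk.injEq] at h'
    exact absurd (h'.1 ▸ hq.2) (disjoint_left.mp h hp.1)

theorem Finset.disjoint_image_mk_product [DecidableEq V] {X Y X' Y' : Finset V}
    (h : Disjoint Y (X' ∪ Y')) :
    Disjoint ((X ×ˢ Y).image fun p => s(p.1, p.2)) ((X' ×ˢ Y').image fun p => s(p.1, p.2)) := by
  simp only [disjoint_left, mem_image, mem_product, Prod.exists, not_exists, not_and]
  rintro _ ⟨a, b, ⟨-, hb⟩, rfl⟩ c d ⟨hc, hd⟩ he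
  rcases Sym2.eq_iff.mp he with ⟨-, hdb⟩ | ⟨hcb, -⟩
  · exact disjoint_left.mp h hb (mem_union_right _ (hdb ▸ hd))
  · exact disjoint_left.mp h hb (mem_union_left _ (hcb ▸ hc))

namespace ExtremalG1

variable [DecidableEq V] {Vp : Fin 4 → Finset V} {Z : Finset V} {G : SimpleGraph V}

theorem disjoint_V14_V23 (hdisj : ∀ i j : Fin 4, i ≠ j → Disjoint (Vp i) (Vp j)) :
    Disjoint (Vp 0 ∪ Vp 3) (Vp 1 ∪ Vp 2) :=
  disjoint_union_left.mpr
    ⟨disjoint_union_right.mpr ⟨hdisj 0 1 (by decide), hdisj 0 2 (by decide)⟩,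
      disjoint_union_right.mpr ⟨hdisj 3 1 (by decide), hdisj 3 2 (by decide)⟩⟩

variable (hG : ∀ u v : V, G.Adj u v ↔
      ((u ∈ Vp 0 ∪ Vp 3 ∧ v ∈ Vp 1 ∪ Vp 2) ∨ (v ∈ Vp 0 ∪ Vp 3 ∧ u ∈ Vp 1 ∪ Vp 2) ∨
       (u ∈ Z ∧ v ∈ Vp 0) ∨ (v ∈ Z ∧ u ∈ Vp 0)))
include hG

theorem mem_V14_iff_of_adj (hAB : Disjoint (Vp 0 ∪ Vp 3) (Vp 1 ∪ Vp 2))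
    {u v : V} (huv : G.Adj u v) (hu : u ∉ Z) (hv : v ∉ Z) :
    u ∈ Vp 0 ∪ Vp 3 ↔ v ∉ Vp 0 ∪ Vp 3 := by
  rcases (hG u v).mp huv with ⟨hu', hv'⟩ | ⟨hv', hu'⟩ | ⟨hu', -⟩ | ⟨hv', -⟩
  · exact iff_of_true hu' (disjoint_right.mp hAB hv')
  · exact iff_of_false (disjoint_right.mp hAB hu') (not_not.mpr hv')
  · exact absurd hu' hu
  · exact absurd hv' hv

theorem edgeSet_eq :
    G.edgeSet = ↑(((Vp 0 ∪ Vp 3) ×ˢ (Vp 1 ∪ Vp 2)).image (fun p => s(p.1, p.2)) ∪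
      (Z ×ˢ Vp 0).image (fun p => s(p.1, p.2))) := by
  rw [coe_union, coe_image, coe_image, ← Set.image_union, ← coe_union]
  refine SimpleGraph.edgeSet_eq_image_mk fun u v => ?_
  simp only [hG, coe_union, Set.mem_union, mem_coe, mem_product]
  tauto

end ExtremalG1

theorem extremal_construction_G1_general
    (k : ℕ) (hk : 1 ≤ k) (n : Fin 4 → ℕ)
    (V : Type) [DecidableEq V]
    (Vp : Fin 4 → Finset V)
    (hdisj : ∀ i j : Fin 4, i ≠ j → Disjoint (Vp i) (Vp j))
    (hcard : ∀ i, (Vp i).card = n i)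
    (Z : Finset V) (hZ : Z ⊆ Vp 3) (hZcard : Z.card = k - 1)
    (G : SimpleGraph V)
    -- G = G1: all edges between V1 ∪ V4 and V2 ∪ V3, plus all edges between Z and V1
    (hG : ∀ u v : V, G.Adj u v ↔
      ((u ∈ Vp 0 ∪ Vp 3 ∧ v ∈ Vp 1 ∪ Vp 2) ∨ (v ∈ Vp 0 ∪ Vp 3 ∧ u ∈ Vp 1 ∪ Vp 2) ∨
       (u ∈ Z ∧ v ∈ Vp 0) ∨ (v ∈ Z ∧ u ∈ Vp 0))) :
    (¬ ∃ S : Finset (Finset V), S.card = k ∧ (∀ T ∈ S, G.IsNClique 3 T) ∧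
        (S : Set (Finset V)).Pairwise Disjoint) ∧
    G.edgeSet.ncard = (n 0 + n 3) * (n 1 + n 2) + (k - 1) * n 0 := by
  have hAB := ExtremalG1.disjoint_V14_V23 hdisj
  refine ⟨?_, ?_⟩
  · rintro ⟨S, hSk, hS3, hSdisj⟩
    have hmeet : ∀ T ∈ S, (T ∩ Z).Nonempty := fun T hT =>
      (hS3 T hT).inter_nonempty_of_bipartite_off (A := ↑(Vp 0 ∪ Vp 3))
        fun _ _ huv hu hv => ExtremalG1.mem_V14_iff_of_adj hG hAB huv hu hv
    have := card_le_card_of_pairwise_disjoint_of_inter_nonempty hSdisj hmeet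
    omega
  · have hZV0 : Disjoint Z (Vp 0) := (hdisj 3 0 (by decide)).mono_left hZ
    have hBZV0 : Disjoint (Vp 1 ∪ Vp 2) (Z ∪ Vp 0) :=
      hAB.symm.mono_right (union_subset (hZ.trans subset_union_right) subset_union_left)
    rw [ExtremalG1.edgeSet_eq hG, Set.ncard_coe_finset,
      card_union_of_disjoint (disjoint_image_mk_product hBZV0), card_image_mk_product hAB,
      card_image_mk_product hZV0, card_union_of_disjoint (hdisj 0 3 (by decide)),
      card_union_of_disjoint (hdisj 1 2 (by decide)), hZcard, hcard, hcard, hcard, hcard]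

theorem extremal_construction_G1
    (k : ℕ) (hk : 1 ≤ k) (n : Fin 4 → ℕ)
    (h43 : k ≤ n 3) (h32 : n 3 ≤ n 2) (h21 : n 2 ≤ n 1) (h10 : n 1 ≤ n 0)
    (V : Type) [Fintype V] [DecidableEq V]
    (Vp : Fin 4 → Finset V)
    (hdisj : ∀ i j : Fin 4, i ≠ j → Disjoint (Vp i) (Vp j))
    (hcover : ∀ v : V, ∃ i, v ∈ Vp i)
    (hcard : ∀ i, (Vp i).card = n i)
    (Z : Finset V) (hZ : Z ⊆ Vp 3) (hZcard : Z.card = k - 1)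
    (G : SimpleGraph V)
    -- G = G1: all edges between V1 ∪ V4 and V2 ∪ V3, plus all edges between Z and V1
    (hG : ∀ u v : V, G.Adj u v ↔
      ((u ∈ Vp 0 ∪ Vp 3 ∧ v ∈ Vp 1 ∪ Vp 2) ∨ (v ∈ Vp 0 ∪ Vp 3 ∧ u ∈ Vp 1 ∪ Vp 2) ∨
       (u ∈ Z ∧ v ∈ Vp 0) ∨ (v ∈ Z ∧ u ∈ Vp 0))) :
    (¬ ∃ S : Finset (Finset V), S.card = k ∧ (∀ T ∈ S, G.IsNClique 3 T) ∧
        (S : Set (Finset V)).Pairwise Disjoint) ∧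
    G.edgeSet.ncard = (n 0 + n 3) * (n 1 + n 2) + (k - 1) * n 0 :=
  extremal_construction_G1_general k hk n V Vp hdisj hcard Z hZ hZcard G hG
end

section
/- Let k ≥ 1 and let G be a 4-partite graph with parts V1, V2, V3, V4 that contains no k pairwise vertex-disjoint triangles. Call an edge xy of G rich if x and y have at least k common neighbors lying in a single part of G. Then G does not contain k pairwise disjoint rich edges (i.e., the graph formed by the rich edges has no matching of size k). -/
/-!
Give the rich edges apexes one at a time. The edge `xᵢyᵢ` has at least `k` common neighbours
in a single part, which is an independent set, while each of the other `k - 1` blocks (an edge,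
or a triangle completed earlier) is a clique and so meets that part in at most one vertex. Hence
some common neighbour avoids every other block, and after `k` steps the blocks are `k` disjoint
triangles.
-/

open Finset Function

variable {V ι : Type*}

lemma Pairwise.disjoint_update [DecidableEq ι] {α : Type*} [PartialOrder α] [OrderBot α]
    {B : ι → α} (hB : Pairwise (Disjoint on B)) {i : ι} {s : α}
    (hs : ∀ j ≠ i, Disjoint s (B j)) :
    Pairwise (Disjoint on update B i s) := by
  intro a b hab
  rw [onFun]
  rcases eq_or_ne a i with rfl | ha
  · rw [update_self, update_of_ne hab.symm]
    exact hs b hab.symm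
  rcases eq_or_ne b i with rfl | hb
  · rw [update_self, update_of_ne hab]
    exact (hs a hab).symm
  rw [update_of_ne ha, update_of_ne hb]
  exact hB hab

namespace SimpleGraph

variable {G : SimpleGraph V} [DecidableEq V]

lemma IsClique.card_inter_le_one_of_isIndepSet {s t : Finset V} (hs : G.IsClique (s : Set V))
    (ht : G.IsIndepSet (t : Set V)) : #(s ∩ t) ≤ 1 := by
  refine card_le_one.mpr fun a ha b hb => ?_
  rw [mem_inter] at ha hb
  by_contra hab
  exact ht ha.2 hb.2 hab (hs ha.1 hb.1 hab)

variable [Fintype ι] [DecidableEq ι]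

lemma IsIndepSet.exists_mem_forall_notMem_of_isClique {C : Finset V}
    (hC : G.IsIndepSet (C : Set V)) {B : ι → Finset V}
    (hB : ∀ j, G.IsClique (B j : Set V)) (i : ι) (hcard : Fintype.card ι ≤ #C) :
    ∃ w ∈ C, ∀ j ≠ i, w ∉ B j := by
  have hblocked : #((univ.erase i).biUnion B ∩ C) < #C :=
    calc #((univ.erase i).biUnion B ∩ C)
        = #((univ.erase i).biUnion fun j => B j ∩ C) := by rw [biUnion_inter]
      _ ≤ ∑ j ∈ univ.erase i, #(B j ∩ C) := card_biUnion_le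
      _ ≤ ∑ _j ∈ univ.erase i, 1 :=
          sum_le_sum fun j _ => (hB j).card_inter_le_one_of_isIndepSet hC
      _ < Fintype.card ι := by
          simp [card_erase_of_mem, Fintype.card_pos_iff.mpr ⟨i⟩]
      _ ≤ #C := hcard
  obtain ⟨w, hwC, hw⟩ := exists_mem_notMem_of_card_lt_card hblocked
  exact ⟨w, hwC, fun j hj hwj =>
    hw (mem_inter.mpr ⟨mem_biUnion.mpr ⟨j, mem_erase.mpr ⟨hj, mem_univ j⟩, hwj⟩, hwC⟩)⟩

variable {x y : ι → V} (hxy : ∀ i, G.Adj (x i) (y i))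
  (hdisj : Pairwise (Disjoint on fun i => ({x i, y i} : Finset V)))
  (hrich : ∀ i, ∃ C : Finset V, (C : Set V) ⊆ G.commonNeighbors (x i) (y i) ∧
    G.IsIndepSet (C : Set V) ∧ Fintype.card ι ≤ #C)
include hxy hdisj hrich

lemma exists_pairwise_disjoint_triangles_on (I : Finset ι) :
    ∃ B : ι → Finset V, (∀ i ∈ I, G.IsNClique 3 (B i)) ∧ (∀ i ∉ I, B i = {x i, y i}) ∧
      Pairwise (Disjoint on B) := by
  induction I using Finset.induction_on with
  | empty => exact ⟨fun i => {x i, y i}, by simp, fun _ _ => rfl, hdisj⟩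
  | insert i I hi ih =>
    obtain ⟨B, htri, hedge, hB⟩ := ih
    have hclique : ∀ j, G.IsClique (B j : Set V) := fun j => by
      by_cases hj : j ∈ I
      · exact (htri j hj).isClique
      · rw [hedge j hj, coe_pair]
        exact isClique_pair.mpr fun _ => hxy j
    obtain ⟨C, hCnbr, hCind, hCcard⟩ := hrich i
    obtain ⟨w, hwC, hwB⟩ := hCind.exists_mem_forall_notMem_of_isClique hclique i hCcard
    obtain ⟨hxw, hyw⟩ := G.mem_commonNeighbors.mp (hCnbr hwC)
    refine ⟨update B i (insert w (B i)), fun j hj => ?_, fun j hj => ?_, ?_⟩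
    · rcases mem_insert.mp hj with rfl | hj
      · rw [update_self, hedge j hi]
        exact is3Clique_triple_iff.mpr ⟨hxw.symm, hyw.symm, hxy j⟩
      · rw [update_of_ne (ne_of_mem_of_not_mem hj hi)]
        exact htri j hj
    · rw [mem_insert, not_or] at hj
      rw [update_of_ne hj.1, hedge j hj.2]
    · exact hB.disjoint_update fun j hj =>
        disjoint_insert_left.mpr ⟨hwB j hj, hB hj.symm⟩

lemma exists_disjoint_triangles :
    ∃ S : Finset (Finset V), #S = Fintype.card ι ∧ (∀ T ∈ S, G.IsNClique 3 T) ∧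
      (S : Set (Finset V)).Pairwise Disjoint := by
  obtain ⟨B, htri, -, hB⟩ := exists_pairwise_disjoint_triangles_on hxy hdisj hrich univ
  have hBinj : Injective B := fun i j hij => by
    by_contra hne
    have hempty := hB hne
    rw [onFun, ← hij, disjoint_self, bot_eq_empty] at hempty
    simpa [hempty] using (htri i (mem_univ i)).card_eq
  refine ⟨univ.image B, by rw [card_image_of_injective _ hBinj, card_univ], ?_, ?_⟩
  · simpa using fun i => htri i (mem_univ i)
  · rw [coe_image, coe_univ, Set.image_univ]
    rintro _ ⟨i, rfl⟩ _ ⟨j, rfl⟩ hne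
    exact hB (ne_of_apply_ne B hne)

end SimpleGraph

theorem rich_edges_no_matching_general
    (k : ℕ)
    (V : Type) [Fintype V] [DecidableEq V]
    (G : SimpleGraph V) [DecidableRel G.Adj]
    (Vp : Fin 4 → Finset V)
    (hpartite : ∀ u v : V, G.Adj u v → ∀ i, u ∈ Vp i → v ∈ Vp i → False)
    -- G contains no k pairwise vertex-disjoint triangles
    (hfree : ¬ ∃ S : Finset (Finset V), S.card = k ∧ (∀ T ∈ S, G.IsNClique 3 T) ∧
        (S : Set (Finset V)).Pairwise Disjoint) :
    -- no k pairwise disjoint rich edges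
    ¬ ∃ e : Fin k → V × V,
      (∀ i : Fin k, G.Adj (e i).1 (e i).2 ∧
        ∃ p : Fin 4, k ≤ ((G.neighborFinset (e i).1 ∩ G.neighborFinset (e i).2) ∩ Vp p).card) ∧
      (∀ i j : Fin k, i ≠ j →
        ({(e i).1, (e i).2} : Set V) ∩ {(e j).1, (e j).2} = ∅) := by
  rintro ⟨e, he, hM⟩
  have hdisj : Pairwise (Disjoint on fun i => ({(e i).1, (e i).2} : Finset V)) := fun i j hij => by
    rw [onFun, ← disjoint_coe, Set.disjoint_iff_inter_eq_empty]
    push_cast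
    exact hM i j hij
  have hrich : ∀ i, ∃ C : Finset V, (C : Set V) ⊆ G.commonNeighbors (e i).1 (e i).2 ∧
      G.IsIndepSet (C : Set V) ∧ Fintype.card (Fin k) ≤ #C := fun i => by
    obtain ⟨p, hp⟩ := (he i).2
    refine ⟨G.neighborFinset (e i).1 ∩ G.neighborFinset (e i).2 ∩ Vp p, fun v hv => ?_,
      fun u hu v hv _ huv => hpartite u v huv p (mem_inter.mp hu).2 (mem_inter.mp hv).2,
      by rwa [Fintype.card_fin]⟩
    simp only [coe_inter, Set.mem_inter_iff, mem_coe, SimpleGraph.mem_neighborFinset] at hv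
    exact G.mem_commonNeighbors.mpr hv.1
  obtain ⟨S, hS, htri, hSdisj⟩ := G.exists_disjoint_triangles (fun i => (he i).1) hdisj hrich
  exact hfree ⟨S, by simpa using hS, htri, hSdisj⟩

theorem rich_edges_no_matching
    (k : ℕ) (hk : 1 ≤ k)
    (V : Type) [Fintype V] [DecidableEq V]
    (G : SimpleGraph V) [DecidableRel G.Adj]
    (Vp : Fin 4 → Finset V)
    (hdisj : ∀ i j : Fin 4, i ≠ j → Disjoint (Vp i) (Vp j))
    (hcover : ∀ v : V, ∃ i, v ∈ Vp i)
    (hpartite : ∀ u v : V, G.Adj u v → ∀ i, u ∈ Vp i → v ∈ Vp i → False)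
    -- G contains no k pairwise vertex-disjoint triangles
    (hfree : ¬ ∃ S : Finset (Finset V), S.card = k ∧ (∀ T ∈ S, G.IsNClique 3 T) ∧
        (S : Set (Finset V)).Pairwise Disjoint) :
    -- no k pairwise disjoint rich edges
    ¬ ∃ e : Fin k → V × V,
      (∀ i : Fin k, G.Adj (e i).1 (e i).2 ∧
        ∃ p : Fin 4, k ≤ ((G.neighborFinset (e i).1 ∩ G.neighborFinset (e i).2) ∩ Vp p).card) ∧
      (∀ i j : Fin k, i ≠ j →
        ({(e i).1, (e i).2} : Set V) ∩ {(e j).1, (e j).2} = ∅) :=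
  rich_edges_no_matching_general k V G Vp hpartite hfree
end

section
/- Let k ≥ 1 and let G be a 3-partite graph with parts of sizes a ≥ b ≥ c, where c ≥ 4k. If G contains no matching of size k (i.e., no k pairwise vertex-disjoint edges), then e(G) ≤ (k−1)(a+b). -/
/-!
Every vertex has degree at most `a + b`, since its neighbours avoid its own part, which has at
least `c` vertices. It then suffices that a graph with maximum degree at most `D` and no matching
with `m + 1` edges, where `4m ≤ D`, has at most `mD` edges. This goes by induction on `m`, so we
may assume that `G` has a matching with `m` edges. If some vertex `v` is met by every such
matching, then `G - v` has no matching with `m` edges and `v` carries at most `D` edges. Otherwise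
every vertex is missed by some matching with `m` edges, whose `2m` vertices must then contain all
its neighbours; so all degrees are at most `2m`, and since the `2m` vertices of such a matching
cover every edge, there are at most `4m² ≤ mD` edges.
-/

open Finset

namespace SimpleGraph

variable {V : Type*} {G H : SimpleGraph V}

/-- Matchings are encoded by families of ordered pairs, as in the theorem, rather than by
`Subgraph.IsMatching`; the size of a matching is then the cardinality of the index type. -/
def IsPairMatching (G : SimpleGraph V) {ι : Type*} (e : ι → V × V) : Prop :=
  (∀ i, G.Adj (e i).1 (e i).2) ∧
    Pairwise fun i j => Disjoint ({(e i).1, (e i).2} : Set V) {(e j).1, (e j).2}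

def HasMatching (G : SimpleGraph V) (m : ℕ) : Prop :=
  ∃ e : Fin m → V × V, G.IsPairMatching e

section PairSupport

variable [DecidableEq V] {ι : Type*} [Fintype ι]

def pairSupport (e : ι → V × V) : Finset V :=
  univ.image (fun i => (e i).1) ∪ univ.image (fun i => (e i).2)

lemma mem_pairSupport {e : ι → V × V} {v : V} :
    v ∈ pairSupport e ↔ ∃ i, (e i).1 = v ∨ (e i).2 = v := by
  simp only [pairSupport, mem_union, mem_image, mem_univ, true_and, exists_or]

lemma card_pairSupport_le (e : ι → V × V) : #(pairSupport e) ≤ 2 * Fintype.card ι :=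
  calc #(pairSupport e) ≤ #(univ : Finset ι) + #(univ : Finset ι) :=
        (card_union_le _ _).trans (add_le_add card_image_le card_image_le)
    _ = 2 * Fintype.card ι := by rw [card_univ, two_mul]

end PairSupport

lemma isPairMatching_of_isEmpty {ι : Type*} [IsEmpty ι] (e : ι → V × V) : G.IsPairMatching e :=
  ⟨isEmptyElim, fun i => isEmptyElim i⟩

lemma IsPairMatching.mono {ι : Type*} {e : ι → V × V} (he : G.IsPairMatching e) (hGH : G ≤ H) :
    H.IsPairMatching e :=
  ⟨fun i => hGH (he.1 i), he.2⟩

lemma IsPairMatching.cons [DecidableEq V] {m : ℕ} {e : Fin m → V × V} {x y : V}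
    (he : G.IsPairMatching e) (hxy : G.Adj x y) (hx : x ∉ pairSupport e)
    (hy : y ∉ pairSupport e) :
    G.IsPairMatching (Fin.cons (x, y) e : Fin (m + 1) → V × V) := by
  have hfresh (i : Fin m) : Disjoint ({x, y} : Set V) {(e i).1, (e i).2} := by
    simp only [Set.disjoint_insert_left, Set.disjoint_singleton_left, Set.mem_insert_iff,
      Set.mem_singleton_iff]
    simp only [mem_pairSupport, not_exists, not_or] at hx hy
    exact ⟨by grind, by grind⟩
  refine ⟨Fin.cases hxy he.1, ?_⟩
  intro i j hij
  cases i using Fin.cases <;> cases j using Fin.cases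
  · exact absurd rfl hij
  · simpa using hfresh _
  · simpa using (hfresh _).symm
  · simpa using he.2 (fun h => hij (by rw [h]))

lemma IsPairMatching.notMem_pairSupport_of_deleteIncidenceSet [DecidableEq V] {ι : Type*}
    [Fintype ι] {e : ι → V × V} {v : V} (he : (G.deleteIncidenceSet v).IsPairMatching e) :
    v ∉ pairSupport e := by
  rw [mem_pairSupport]
  rintro ⟨i, hi | hi⟩
  · exact (deleteIncidenceSet_adj.1 (he.1 i)).2.1 hi
  · exact (deleteIncidenceSet_adj.1 (he.1 i)).2.2 hi

lemma IsPairMatching.isVertexCover [DecidableEq V] {m : ℕ} {e : Fin m → V × V}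
    (he : G.IsPairMatching e) (hno : ¬ G.HasMatching (m + 1)) :
    G.IsVertexCover (pairSupport e) := by
  intro x y hxy
  by_contra! h
  exact hno ⟨_, he.cons hxy h.1 h.2⟩

section Degree

variable [Fintype V] [DecidableRel G.Adj]

lemma IsVertexCover.card_edgeFinset_le_sum_degree [DecidableEq V] {s : Finset V}
    (hs : G.IsVertexCover s) :
    #G.edgeFinset ≤ ∑ v ∈ s, G.degree v := by
  have hcover : G.edgeFinset ⊆ s.biUnion fun v => G.incidenceFinset v := by
    intro e he
    induction e with
    | h x y =>
      rw [mem_edgeFinset, mem_edgeSet] at he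
      rcases hs he with hx | hy
      · exact mem_biUnion.2 ⟨x, hx, (mem_incidenceFinset _ _ _).2 ⟨he, Sym2.mem_mk_left x y⟩⟩
      · exact mem_biUnion.2 ⟨y, hy, (mem_incidenceFinset _ _ _).2 ⟨he, Sym2.mem_mk_right x y⟩⟩
  calc #G.edgeFinset ≤ #(s.biUnion fun v => G.incidenceFinset v) := card_le_card hcover
    _ ≤ ∑ v ∈ s, #(G.incidenceFinset v) := card_biUnion_le
    _ = ∑ v ∈ s, G.degree v := by simp only [card_incidenceFinset_eq_degree]

lemma IsVertexCover.degree_le_card {s : Finset V} (hs : G.IsVertexCover s) {v : V}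
    (hv : v ∉ s) : G.degree v ≤ #s :=
  card_le_card fun _ hu => ((hs ((mem_neighborFinset _ _ _).1 hu)).resolve_left hv)

lemma degree_le_card_sub_card_of_disjoint [DecidableEq V] {s : Finset V} {v : V}
    (h : Disjoint (G.neighborFinset v) s) : G.degree v ≤ Fintype.card V - #s := by
  rw [← card_compl]
  exact card_le_card (subset_compl_iff_disjoint_right.2 h)

end Degree

section MatchingBound

variable [Fintype V] [DecidableEq V] [DecidableRel G.Adj]

lemma card_edgeFinset_le_of_forall_hasMatching_deleteIncidenceSet {m : ℕ} {e : Fin m → V × V}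
    (he : G.IsPairMatching e) (hno : ¬ G.HasMatching (m + 1))
    (havoid : ∀ v, (G.deleteIncidenceSet v).HasMatching m) :
    #G.edgeFinset ≤ (2 * m) * (2 * m) := by
  have hdeg (v : V) : G.degree v ≤ 2 * m := by
    obtain ⟨f, hf⟩ := havoid v
    calc G.degree v ≤ #(pairSupport f) :=
          ((hf.mono (deleteIncidenceSet_le G v)).isVertexCover hno).degree_le_card
            hf.notMem_pairSupport_of_deleteIncidenceSet
      _ ≤ 2 * m := by simpa using card_pairSupport_le f
  calc #G.edgeFinset ≤ ∑ v ∈ pairSupport e, G.degree v :=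
        (he.isVertexCover hno).card_edgeFinset_le_sum_degree
    _ ≤ #(pairSupport e) * (2 * m) := sum_le_card_nsmul _ _ _ fun v _ => hdeg v
    _ ≤ (2 * m) * (2 * m) := by
        gcongr
        simpa using card_pairSupport_le e

end MatchingBound

theorem card_edgeFinset_le_of_not_hasMatching [Fintype V] [DecidableEq V] {D : ℕ} (m : ℕ)
    (G : SimpleGraph V) [DecidableRel G.Adj] (hdeg : ∀ v, G.degree v ≤ D) (hD : 4 * m ≤ D)
    (hno : ¬ G.HasMatching (m + 1)) : #G.edgeFinset ≤ m * D := by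
  induction m generalizing G with
  | zero =>
    have hcover := (isPairMatching_of_isEmpty (G := G) Fin.elim0).isVertexCover hno
    simpa [pairSupport] using hcover.card_edgeFinset_le_sum_degree
  | succ m ih =>
    by_cases hm : G.HasMatching (m + 1)
    · obtain ⟨e, he⟩ := hm
      by_cases havoid : ∀ v, (G.deleteIncidenceSet v).HasMatching (m + 1)
      · calc #G.edgeFinset ≤ (2 * (m + 1)) * (2 * (m + 1)) :=
              card_edgeFinset_le_of_forall_hasMatching_deleteIncidenceSet he hno havoid
          _ ≤ (m + 1) * D := by nlinarith
      · obtain ⟨v, hv⟩ := not_forall.1 havoid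
        have hdel := ih (G.deleteIncidenceSet v)
          (fun x => (degree_le_of_le (deleteIncidenceSet_le G v)).trans (hdeg x)) (by omega) hv
        have hcard := card_edgeFinset_deleteIncidenceSet G v
        calc #G.edgeFinset ≤ #(G.deleteIncidenceSet v).edgeFinset + G.degree v := by omega
          _ ≤ m * D + D := add_le_add hdel (hdeg v)
          _ = (m + 1) * D := by ring
    · exact (ih G hdeg (by omega) hm).trans (Nat.mul_le_mul_right _ m.le_succ)

end SimpleGraph

open SimpleGraph

theorem tripartite_no_matching_edge_bound_general
    (k : ℕ)
    (V : Type) [Fintype V]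
    (G : SimpleGraph V)
    (Vp : Fin 3 → Finset V) (a b c : ℕ)
    (hcover : ∀ v : V, ∃ i, v ∈ Vp i)
    (hcard0 : (Vp 0).card = a) (hcard1 : (Vp 1).card = b) (hcard2 : (Vp 2).card = c)
    (hab : b ≤ a) (hbc : c ≤ b) (hc : 4 * k ≤ c)
    (hpartite : ∀ u v : V, G.Adj u v → ∀ i, u ∈ Vp i → v ∈ Vp i → False)
    -- G contains no matching of size k
    (hnomatching : ¬ ∃ e : Fin k → V × V,
      (∀ i : Fin k, G.Adj (e i).1 (e i).2) ∧
      (∀ i j : Fin k, i ≠ j →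
        ({(e i).1, (e i).2} : Set V) ∩ {(e j).1, (e j).2} = ∅)) :
    G.edgeSet.ncard ≤ (k - 1) * (a + b) := by
  classical
  have hno : ¬ G.HasMatching k := fun ⟨e, he⟩ =>
    hnomatching ⟨e, he.1, fun _ _ hij => Set.disjoint_iff_inter_eq_empty.1 (he.2 hij)⟩
  obtain _ | m := k
  · exact absurd ⟨Fin.elim0, isPairMatching_of_isEmpty _⟩ hno
  have hV : Fintype.card V ≤ a + b + c :=
    calc Fintype.card V = #(univ.biUnion Vp) := by
          rw [← card_univ, eq_univ_of_forall fun v => mem_biUnion.2 (by simpa using hcover v)]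
      _ ≤ ∑ i, #(Vp i) := card_biUnion_le
      _ = a + b + c := by rw [Fin.sum_univ_three, hcard0, hcard1, hcard2]
  have hdeg (v : V) : G.degree v ≤ a + b := by
    obtain ⟨i, hi⟩ := hcover v
    have hci : c ≤ #(Vp i) := by fin_cases i <;> simp <;> omega
    have := degree_le_card_sub_card_of_disjoint <| disjoint_left.2 fun u hu hui =>
      hpartite v u ((mem_neighborFinset G v u).1 hu) i hi hui
    omega
  rw [← coe_edgeFinset, Set.ncard_coe_finset]
  exact card_edgeFinset_le_of_not_hasMatching m G hdeg (by omega) hno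

theorem tripartite_no_matching_edge_bound
    (k : ℕ) (hk : 1 ≤ k)
    (V : Type) [Fintype V] [DecidableEq V]
    (G : SimpleGraph V)
    (Vp : Fin 3 → Finset V) (a b c : ℕ)
    (hdisj : ∀ i j : Fin 3, i ≠ j → Disjoint (Vp i) (Vp j))
    (hcover : ∀ v : V, ∃ i, v ∈ Vp i)
    (hcard0 : (Vp 0).card = a) (hcard1 : (Vp 1).card = b) (hcard2 : (Vp 2).card = c)
    (hab : b ≤ a) (hbc : c ≤ b) (hc : 4 * k ≤ c)
    (hpartite : ∀ u v : V, G.Adj u v → ∀ i, u ∈ Vp i → v ∈ Vp i → False)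
    -- G contains no matching of size k
    (hnomatching : ¬ ∃ e : Fin k → V × V,
      (∀ i : Fin k, G.Adj (e i).1 (e i).2) ∧
      (∀ i j : Fin k, i ≠ j →
        ({(e i).1, (e i).2} : Set V) ∩ {(e j).1, (e j).2} = ∅)) :
    G.edgeSet.ncard ≤ (k - 1) * (a + b) :=
  tripartite_no_matching_edge_bound_general k V G Vp a b c hcover hcard0 hcard1 hcard2 hab hbc hc
    hpartite hnomatching
end

section
/- Let G be a 4-partite graph with parts V1, V2, V3, V4 of sizes n1, n2, n3, n4, and let Z ⊆ V(G) be a set with |Z| < min{n1, n2, n3, n4} such that every triangle of G contains an edge with both endpoints in Z. Fix distinct i, j ∈ {1,2,3,4} and suppose that every edge xy of G with x ∈ Vi and y ∈ Vj satisfies d(x) + d(y) > n1 + n2 + n3 + n4. Then every edge of G between Vi and Vj has both endpoints in Z; that is, there is no edge between Vi \ Z and Vj, and no edge between Vi and Vj \ Z. -/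
/-!
Let `x ∈ Vᵢ \ Z` be adjacent to `y ∈ Vⱼ`. As `x ∉ Z`, every triangle through `x` has its edge
in `Z` opposite to `x`. A degree sum exceeding `|V|` forces a common neighbour, so every neighbour
of `x` in `Vⱼ` lies in `Z`, and so does every common neighbour of `x` and `y`. Hence
`N(x) ∪ N(y)` misses `Vⱼ \ Z` and `N(x) ∩ N(y) ⊆ Z \ Vⱼ`, giving
`d(x) + d(y) ≤ |V| - |Vⱼ| + |Z| < |V|`, a contradiction.
-/

open Finset

namespace SimpleGraph

variable {V : Type*} [Fintype V] [DecidableEq V] (G : SimpleGraph V) [DecidableRel G.Adj]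

theorem degree_add_degree_add_card_le {x y : V} {A B : Finset V}
    (hA : ∀ v ∈ A, ¬G.Adj x v ∧ ¬G.Adj y v) (hB : ∀ v, G.Adj x v → G.Adj y v → v ∈ B) :
    G.degree x + G.degree y + #A ≤ Fintype.card V + #B := by
  rw [← card_neighborFinset_eq_degree, ← card_neighborFinset_eq_degree,
    ← card_union_add_card_inter]
  have hunion : #(G.neighborFinset x ∪ G.neighborFinset y) + #A ≤ Fintype.card V := by
    rw [← card_union_of_disjoint]
    · exact card_le_univ _
    · refine Finset.disjoint_left.2 fun v hv hvA => ?_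
      rw [mem_union, mem_neighborFinset, mem_neighborFinset] at hv
      exact hv.elim (hA v hvA).1 (hA v hvA).2
  have hinter : #(G.neighborFinset x ∩ G.neighborFinset y) ≤ #B :=
    card_le_card fun v hv => by
      rw [mem_inter, mem_neighborFinset, mem_neighborFinset] at hv
      exact hB v hv.1 hv.2
  omega

theorem exists_common_neighbor_of_card_lt_degree_add_degree {x y : V}
    (h : Fintype.card V < G.degree x + G.degree y) : ∃ z, G.Adj x z ∧ G.Adj y z := by
  by_contra! hxy
  have := G.degree_add_degree_add_card_le (A := ∅) (B := ∅) (by simp) (by simpa using hxy)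
  simp only [card_empty, add_zero] at this
  omega

theorem not_adj_of_forall_triangle_edge_mem {X Y Z : Finset V}
    (hZ : ∀ x y z : V, G.Adj x y → G.Adj x z → G.Adj y z →
      (x ∈ Z ∧ y ∈ Z) ∨ (x ∈ Z ∧ z ∈ Z) ∨ (y ∈ Z ∧ z ∈ Z))
    (hY : ∀ y ∈ Y, ∀ v ∈ Y, ¬G.Adj y v) (hZY : #Z < #Y)
    (hdeg : ∀ x ∈ X, ∀ y ∈ Y, G.Adj x y → Fintype.card V < G.degree x + G.degree y) :
    ∀ x ∈ X \ Z, ∀ y ∈ Y, ¬G.Adj x y := by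
  intro x hx y hy hxy
  obtain ⟨hxX, hxZ⟩ := mem_sdiff.1 hx
  have triangle_mem {v z : V} (hxv : G.Adj x v) (hxz : G.Adj x z) (hvz : G.Adj v z) :
      v ∈ Z ∧ z ∈ Z := by
    rcases hZ x v z hxv hxz hvz with h | h | h
    exacts [absurd h.1 hxZ, absurd h.1 hxZ, h]
  have nbr_mem_Z : ∀ v ∈ Y, G.Adj x v → v ∈ Z := fun v hv hxv =>
    have ⟨_, hxz, hvz⟩ :=
      G.exists_common_neighbor_of_card_lt_degree_add_degree (hdeg x hxX v hv hxv)
    (triangle_mem hxv hxz hvz).1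
  have hA : ∀ v ∈ Y \ Z, ¬G.Adj x v ∧ ¬G.Adj y v := fun v hv =>
    ⟨fun hxv => (mem_sdiff.1 hv).2 (nbr_mem_Z v (mem_sdiff.1 hv).1 hxv),
      hY y hy v (mem_sdiff.1 hv).1⟩
  have hB : ∀ v, G.Adj x v → G.Adj y v → v ∈ Z \ Y := fun v hxv hyv =>
    mem_sdiff.2 ⟨(triangle_mem hxy hxv hyv).2, fun hv => hY y hy v hv hyv⟩
  have hsum := G.degree_add_degree_add_card_le hA hB
  have hxy_deg := hdeg x hxX y hy hxy
  have hYZ := card_sdiff_add_card_inter Y Z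
  have hZY' := card_sdiff_add_card_inter Z Y
  rw [inter_comm] at hZY'
  omega

end SimpleGraph

theorem claim1_empty_pair_general
    (V : Type) [Fintype V] [DecidableEq V]
    (G : SimpleGraph V) [DecidableRel G.Adj]
    (Vp : Fin 4 → Finset V) (n : Fin 4 → ℕ)
    (hcover : ∀ v : V, ∃ i, v ∈ Vp i)
    (hcard : ∀ i, (Vp i).card = n i)
    (hpartite : ∀ u v : V, G.Adj u v → ∀ i, u ∈ Vp i → v ∈ Vp i → False)
    (Z : Finset V)
    (hZsmall : Z.card < min (min (n 0) (n 1)) (min (n 2) (n 3)))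
    -- every triangle of G contains an edge with both endpoints in Z
    (hZ : ∀ x y z : V, G.Adj x y → G.Adj x z → G.Adj y z →
      (x ∈ Z ∧ y ∈ Z) ∨ (x ∈ Z ∧ z ∈ Z) ∨ (y ∈ Z ∧ z ∈ Z))
    (i j : Fin 4)
    -- every edge between Vi and Vj has degree sum greater than n1 + n2 + n3 + n4
    (hdeg : ∀ x ∈ Vp i, ∀ y ∈ Vp j, G.Adj x y →
      n 0 + n 1 + n 2 + n 3 < G.degree x + G.degree y) :
    (∀ x ∈ Vp i \ Z, ∀ y ∈ Vp j, ¬ G.Adj x y) ∧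
    (∀ x ∈ Vp i, ∀ y ∈ Vp j \ Z, ¬ G.Adj x y) := by
  have hV : Fintype.card V ≤ n 0 + n 1 + n 2 + n 3 := by
    calc Fintype.card V = #(univ.biUnion Vp) := by
          rw [← card_univ, eq_univ_of_forall (s := univ.biUnion Vp) fun v => by simpa using hcover v]
      _ ≤ ∑ t, #(Vp t) := card_biUnion_le
      _ = n 0 + n 1 + n 2 + n 3 := by simp only [Fin.sum_univ_four, hcard]
  have hZn : ∀ t, #Z < #(Vp t) := fun t => by
    rw [hcard]; fin_cases t <;> simp only [Fin.zero_eta, Fin.mk_one, Fin.reduceFinMk] <;> omega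
  have one_side {a b : Fin 4}
      (h : ∀ x ∈ Vp a, ∀ y ∈ Vp b, G.Adj x y → n 0 + n 1 + n 2 + n 3 < G.degree x + G.degree y) :
      ∀ x ∈ Vp a \ Z, ∀ y ∈ Vp b, ¬ G.Adj x y :=
    G.not_adj_of_forall_triangle_edge_mem hZ (fun y hy v hv hyv => hpartite y v hyv b hy hv)
      (hZn b) fun x hx y hy hxy => hV.trans_lt (h x hx y hy hxy)
  refine ⟨one_side hdeg, fun x hx y hy hxy => one_side ?_ y hy x hx hxy.symm⟩
  intro y hy x hx hyx
  rw [add_comm (G.degree y)]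
  exact hdeg x hx y hy hyx.symm

theorem claim1_empty_pair
    (V : Type) [Fintype V] [DecidableEq V]
    (G : SimpleGraph V) [DecidableRel G.Adj]
    (Vp : Fin 4 → Finset V) (n : Fin 4 → ℕ)
    (hdisj : ∀ i j : Fin 4, i ≠ j → Disjoint (Vp i) (Vp j))
    (hcover : ∀ v : V, ∃ i, v ∈ Vp i)
    (hcard : ∀ i, (Vp i).card = n i)
    (hpartite : ∀ u v : V, G.Adj u v → ∀ i, u ∈ Vp i → v ∈ Vp i → False)
    (Z : Finset V)
    (hZsmall : Z.card < min (min (n 0) (n 1)) (min (n 2) (n 3)))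
    -- every triangle of G contains an edge with both endpoints in Z
    (hZ : ∀ x y z : V, G.Adj x y → G.Adj x z → G.Adj y z →
      (x ∈ Z ∧ y ∈ Z) ∨ (x ∈ Z ∧ z ∈ Z) ∨ (y ∈ Z ∧ z ∈ Z))
    (i j : Fin 4) (hij : i ≠ j)
    -- every edge between Vi and Vj has degree sum greater than n1 + n2 + n3 + n4
    (hdeg : ∀ x ∈ Vp i, ∀ y ∈ Vp j, G.Adj x y →
      n 0 + n 1 + n 2 + n 3 < G.degree x + G.degree y) :
    (∀ x ∈ Vp i \ Z, ∀ y ∈ Vp j, ¬ G.Adj x y) ∧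
    (∀ x ∈ Vp i, ∀ y ∈ Vp j \ Z, ¬ G.Adj x y) :=
  claim1_empty_pair_general V G Vp n hcover hcard hpartite Z hZsmall hZ i j hdeg
end

section
/- Let k ≥ 1 and let G be a 4-partite graph with parts V1, V2, V3, V4 of sizes n1, n2, n3, n4. If xy is an edge of G with d(x) + d(y) ≥ n1 + n2 + n3 + n4 + 2k − 1, then there is a part Vp (distinct from the parts containing x and y) such that x and y have at least k common neighbors in Vp; that is, xy is a rich edge. -/
/-!
Split the neighbourhoods of `x` and `y` along the parts. Inside a part `P`, inclusion–exclusion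
gives `|N(x) ∩ P| + |N(y) ∩ P| ≤ |P| + |N(x) ∩ N(y) ∩ P|`, so summing over all parts the common
neighbours number at least `d(x) + d(y) - (n₁ + n₂ + n₃ + n₄) ≥ 2k - 1`. None of them lies in a part
containing `x` or `y`, and since `x` and `y` are adjacent there are at most two other parts; by
pigeonhole one of those holds at least `k` common neighbours.
-/

open Finset

namespace Finset

variable {ι α : Type*} [DecidableEq α]

theorem card_le_sum_card_inter [Fintype ι] (s : Finset α) (P : ι → Finset α)
    (hP : ∀ a ∈ s, ∃ i, a ∈ P i) : #s ≤ ∑ i, #(s ∩ P i) :=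
  calc #s ≤ #(univ.biUnion fun i => s ∩ P i) := card_le_card fun a ha => by
        obtain ⟨i, hi⟩ := hP a ha
        exact mem_biUnion.mpr ⟨i, mem_univ i, mem_inter.mpr ⟨ha, hi⟩⟩
    _ ≤ ∑ i, #(s ∩ P i) := card_biUnion_le

theorem card_inter_add_card_inter_le (s t u : Finset α) :
    #(s ∩ u) + #(t ∩ u) ≤ #u + #(s ∩ t ∩ u) := by
  rw [← card_inter_add_card_union (s ∩ u), add_comm, ← inter_inter_distrib_right,
    ← union_inter_distrib_right]
  exact Nat.add_le_add_right (card_le_card inter_subset_right) _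

theorem exists_le_of_card_mul_lt_sum {s : Finset ι} {f : ι → ℕ} {m k : ℕ} (hs : #s ≤ m)
    (hf : m * (k - 1) < ∑ i ∈ s, f i) : ∃ i ∈ s, k ≤ f i := by
  have hconst : ∑ _i ∈ s, (k - 1) < ∑ i ∈ s, f i := by
    rw [sum_const, smul_eq_mul]
    exact lt_of_le_of_lt (Nat.mul_le_mul_right _ hs) hf
  obtain ⟨i, hi, hlt⟩ := exists_lt_of_sum_lt hconst
  exact ⟨i, hi, by omega⟩

end Finset

namespace SimpleGraph

variable {V ι : Type*} [Fintype V] {G : SimpleGraph V} [DecidableRel G.Adj]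

theorem disjoint_neighborFinset_of_isIndepSet {s : Finset V} (hs : G.IsIndepSet s) {x : V}
    (hx : x ∈ s) : Disjoint (G.neighborFinset x) s :=
  Finset.disjoint_left.mpr fun _ hv hvs =>
    hs hx hvs (G.ne_of_adj ((G.mem_neighborFinset _ _).mp hv)) ((G.mem_neighborFinset _ _).mp hv)

variable [DecidableEq V] [Fintype ι] {P : ι → Finset V}

theorem degree_add_degree_le (hcover : ∀ v, ∃ i, v ∈ P i) (x y : V) :
    G.degree x + G.degree y ≤
      ∑ i, #(P i) + ∑ i, #(G.neighborFinset x ∩ G.neighborFinset y ∩ P i) := by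
  simp only [← card_neighborFinset_eq_degree, ← sum_add_distrib]
  calc #(G.neighborFinset x) + #(G.neighborFinset y)
      ≤ ∑ i, #(G.neighborFinset x ∩ P i) + ∑ i, #(G.neighborFinset y ∩ P i) :=
        Nat.add_le_add (card_le_sum_card_inter _ P fun v _ => hcover v)
          (card_le_sum_card_inter _ P fun v _ => hcover v)
    _ ≤ _ := by
        rw [← sum_add_distrib]
        exact sum_le_sum fun i _ => card_inter_add_card_inter_le _ _ _

theorem exists_part_le_card_commonNeighbors (hindep : ∀ i, G.IsIndepSet (P i))
    (hcover : ∀ v, ∃ i, v ∈ P i) {x y : V} (hxy : G.Adj x y) {k : ℕ}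
    (hdeg : ∑ i, #(P i) + (Fintype.card ι - 2) * (k - 1) < G.degree x + G.degree y) :
    ∃ p, x ∉ P p ∧ y ∉ P p ∧ k ≤ #(G.neighborFinset x ∩ G.neighborFinset y ∩ P p) := by
  classical
  have hfree_of_ne_zero : ∀ i, #(G.neighborFinset x ∩ G.neighborFinset y ∩ P i) ≠ 0 →
      x ∉ P i ∧ y ∉ P i := by
    refine fun i hi => ⟨fun hx => hi ?_, fun hy => hi ?_⟩
    · exact card_eq_zero.mpr <| disjoint_iff_inter_eq_empty.mp <|
        (disjoint_neighborFinset_of_isIndepSet (hindep i) hx).mono_left inter_subset_left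
    · exact card_eq_zero.mpr <| disjoint_iff_inter_eq_empty.mp <|
        (disjoint_neighborFinset_of_isIndepSet (hindep i) hy).mono_left inter_subset_right
  obtain ⟨i, hxi⟩ := hcover x
  obtain ⟨j, hyj⟩ := hcover y
  have hij : i ≠ j := by
    rintro rfl
    exact hindep i hxi hyj (G.ne_of_adj hxy) hxy
  have hfree_card : #{p | x ∉ P p ∧ y ∉ P p} ≤ Fintype.card ι - 2 := by
    rw [← card_pair hij, ← card_univ_sdiff]
    refine card_le_card fun p hp => ?_
    simp only [mem_filter, mem_univ, true_and] at hp
    simp only [mem_sdiff, mem_univ, true_and, mem_insert, mem_singleton]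
    rintro (rfl | rfl)
    exacts [hp.1 hxi, hp.2 hyj]
  have hsum : (Fintype.card ι - 2) * (k - 1) < ∑ p with x ∉ P p ∧ y ∉ P p,
      #(G.neighborFinset x ∩ G.neighborFinset y ∩ P p) := by
    rw [sum_filter_of_ne fun i _ => hfree_of_ne_zero i]
    have := degree_add_degree_le (G := G) hcover x y
    omega
  obtain ⟨p, hp, hkp⟩ := exists_le_of_card_mul_lt_sum hfree_card hsum
  exact ⟨p, (mem_filter.mp hp).2.1, (mem_filter.mp hp).2.2, hkp⟩

end SimpleGraph

theorem high_degree_sum_edge_is_rich_general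
    (k : ℕ) (hk : 1 ≤ k)
    (V : Type) [Fintype V] [DecidableEq V]
    (G : SimpleGraph V) [DecidableRel G.Adj]
    (Vp : Fin 4 → Finset V) (n : Fin 4 → ℕ)
    (hcover : ∀ v : V, ∃ i, v ∈ Vp i)
    (hcard : ∀ i, (Vp i).card = n i)
    (hpartite : ∀ u v : V, G.Adj u v → ∀ i, u ∈ Vp i → v ∈ Vp i → False)
    (x y : V) (hxy : G.Adj x y)
    (hdeg : n 0 + n 1 + n 2 + n 3 + 2 * k - 1 ≤ G.degree x + G.degree y) :
    ∃ p : Fin 4, x ∉ Vp p ∧ y ∉ Vp p ∧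
      k ≤ ((G.neighborFinset x ∩ G.neighborFinset y) ∩ Vp p).card := by
  refine G.exists_part_le_card_commonNeighbors (fun i u hu v hv _ huv => hpartite u v huv i hu hv)
    hcover hxy ?_
  simp only [hcard, Fin.sum_univ_four, Fintype.card_fin]
  omega

theorem high_degree_sum_edge_is_rich
    (k : ℕ) (hk : 1 ≤ k)
    (V : Type) [Fintype V] [DecidableEq V]
    (G : SimpleGraph V) [DecidableRel G.Adj]
    (Vp : Fin 4 → Finset V) (n : Fin 4 → ℕ)
    (hdisj : ∀ i j : Fin 4, i ≠ j → Disjoint (Vp i) (Vp j))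
    (hcover : ∀ v : V, ∃ i, v ∈ Vp i)
    (hcard : ∀ i, (Vp i).card = n i)
    (hpartite : ∀ u v : V, G.Adj u v → ∀ i, u ∈ Vp i → v ∈ Vp i → False)
    (x y : V) (hxy : G.Adj x y)
    (hdeg : n 0 + n 1 + n 2 + n 3 + 2 * k - 1 ≤ G.degree x + G.degree y) :
    ∃ p : Fin 4, x ∉ Vp p ∧ y ∉ Vp p ∧
      k ≤ ((G.neighborFinset x ∩ G.neighborFinset y) ∩ Vp p).card :=
  high_degree_sum_edge_is_rich_general k hk V G Vp n hcover hcard hpartite x y hxy hdeg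
end

section
/- Let r > t ≥ 3 and k ≥ 1 be integers and let n1, …, nr be integers with ni ≥ k for all i. Then the maximum number of edges of a subgraph of the complete r-partite graph K_{n1,…,nr} containing no k pairwise vertex-disjoint copies of K_t is at least max over all partitions 𝒫 of {1,…,r} into t−1 parts of (k−1)·n_𝒫 + Σ_{I ≠ I' ∈ 𝒫} n_I · n_{I'}, where n_I = Σ_{i∈I} n_i, m_I = min_{i∈I} n_i, n_𝒫 = max_{I∈𝒫} (n_I − m_I), and the sum is over unordered pairs of distinct parts of 𝒫. -/
/-!
Merge the classes of `K_{n₁,…,n_r}` along `𝒫` into `t - 1` groups and keep only the edges between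
different groups. Then pick a group `I` attaining `n_𝒫` and a smallest class `i₀` of `I`, and add
`k - 1` hubs in class `i₀`, each joined to every vertex of `I` outside class `i₀`. A `K_t` has two
vertices in one group, hence contains a hub, so there are at most `k - 1` disjoint copies of `K_t`;
the edge count is `Σ n_I n_I'` across groups plus `(k - 1)(n_I - m_I)` at the hubs.
-/

open Finset

variable {V β : Type*}

theorem Finset.card_filter_apply_lt_apply [Fintype V] [Fintype β] [LinearOrder β] (c : V → β) :
    #{p : V × V | c p.1 < c p.2} =
      ∑ j, ∑ j', if j < j' then #{v | c v = j} * #{v | c v = j'} else 0 := by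
  rw [card_eq_sum_card_fiberwise (f := fun p : V × V => (c p.1, c p.2)) (t := univ)
    (fun _ _ => mem_coe.2 (mem_univ _)), Fintype.sum_prod_type]
  refine sum_congr rfl fun j _ => sum_congr rfl fun j' _ => ?_
  split_ifs with h
  · rw [← card_product]
    congr 1
    ext ⟨v, w⟩
    simp only [mem_filter, mem_univ, true_and, mem_product, Prod.mk.injEq]
    constructor
    · exact fun h => h.2
    · rintro ⟨rfl, rfl⟩; exact ⟨h, rfl, rfl⟩
  · rw [card_eq_zero, filter_eq_empty_iff]
    rintro ⟨v, w⟩ hp ⟨rfl, rfl⟩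
    exact h (mem_filter.1 hp).2

theorem Finset.card_filter_sigma_fst_mem {ι : Type*} {α : ι → Type*} [Fintype ι]
    [∀ i, Fintype (α i)] [DecidableEq ι] (s : Finset ι) :
    #{v : Σ i, α i | v.1 ∈ s} = ∑ i ∈ s, Fintype.card (α i) := by
  rw [show ({v : Σ i, α i | v.1 ∈ s} : Finset _) = s.sigma fun _ => univ by ext; simp, card_sigma]
  rfl

theorem Finset.card_le_card_of_pairwise_disjoint {𝒮 : Finset (Finset V)} {S : Finset V}
    (h𝒮 : (𝒮 : Set (Finset V)).Pairwise Disjoint) (hS : ∀ T ∈ 𝒮, ∃ v ∈ T, v ∈ S) :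
    #𝒮 ≤ #S := by
  refine card_le_card_of_forall_subsingleton (fun T v => v ∈ T)
    (fun T hT => (hS T hT).imp fun v hv => ⟨hv.2, hv.1⟩) fun v _ T hT T' hT' => ?_
  by_contra hne
  exact disjoint_left.1 (h𝒮 hT.1 hT'.1 hne) hT.2 hT'.2

namespace SimpleGraph

def partiteWithHubs (H : SimpleGraph V) (c : V → β) (S : Finset V) : SimpleGraph V :=
  H ⊓ ((⊤ : SimpleGraph β).comap c ⊔ fromRel fun v _ => v ∈ S)

variable {H : SimpleGraph V} {c : V → β} {S : Finset V}

theorem partiteWithHubs_adj {v w : V} :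
    (H.partiteWithHubs c S).Adj v w ↔ H.Adj v w ∧ (c v ≠ c w ∨ v ≠ w ∧ (v ∈ S ∨ w ∈ S)) := by
  simp [partiteWithHubs]

theorem partiteWithHubs_le : H.partiteWithHubs c S ≤ H := inf_le_left

theorem exists_mem_hubs_of_isNClique [Fintype β] {t : ℕ} {T : Finset V}
    (hT : (H.partiteWithHubs c S).IsNClique t T) (ht : Fintype.card β < t) : ∃ v ∈ T, v ∈ S := by
  obtain ⟨v, hv, w, hw, hvw, hc⟩ := exists_ne_map_eq_of_card_lt_of_maps_to
    (t := univ) (by rwa [card_univ, hT.card_eq]) fun v _ => mem_coe.2 (mem_univ (c v))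
  rcases (partiteWithHubs_adj.1 (hT.isClique hv hw hvw)).2 with h | ⟨-, h | h⟩
  · exact absurd hc h
  · exact ⟨v, hv, h⟩
  · exact ⟨w, hw, h⟩

theorem partiteWithHubs_not_exists_disjoint_isNClique [Fintype β] {t k : ℕ}
    (ht : Fintype.card β < t) (hS : #S < k) :
    ¬ ∃ 𝒮 : Finset (Finset V), #𝒮 = k ∧ (∀ T ∈ 𝒮, (H.partiteWithHubs c S).IsNClique t T) ∧
      (𝒮 : Set (Finset V)).Pairwise Disjoint := by
  rintro ⟨𝒮, rfl, h𝒮, hdisj⟩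
  exact hS.not_ge <| card_le_card_of_pairwise_disjoint hdisj fun T hT =>
    exists_mem_hubs_of_isNClique (h𝒮 T hT) ht

theorem card_le_ncard_edgeSet [Finite V] {G : SimpleGraph V} {s : Finset (V × V)}
    (hadj : ∀ p ∈ s, G.Adj p.1 p.2) (hswap : ∀ p ∈ s, p.swap ∉ s) : #s ≤ G.edgeSet.ncard := by
  classical
  have hinj : Set.InjOn (fun p : V × V => s(p.1, p.2)) s := by
    intro p hp q hq hpq
    rcases Sym2.mk_eq_mk_iff.1 hpq with h | h
    · exact h
    · exact absurd (h ▸ hq) (hswap p hp)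
  rw [← card_image_of_injOn hinj, ← Set.ncard_coe_finset]
  refine Set.ncard_le_ncard ?_ (Set.toFinite _)
  rw [coe_image]
  rintro _ ⟨p, hp, rfl⟩
  exact hadj p hp

theorem le_ncard_edgeSet_partiteWithHubs {ι : Type*} {α : ι → Type*} [Fintype ι]
    [DecidableEq ι] [∀ i, Fintype (α i)] [Fintype β] [LinearOrder β] (P : ι → β) {i₀ : ι}
    {S : Finset (Σ i, α i)} (hS : ∀ v ∈ S, v.1 = i₀) :
    #S * ∑ i ∈ ({i | P i = P i₀} : Finset ι).erase i₀, Fintype.card (α i) +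
      ∑ j, ∑ j', (if j < j' then (∑ i with P i = j, Fintype.card (α i)) *
        (∑ i with P i = j', Fintype.card (α i)) else 0) ≤
    ((completeMultipartiteGraph α).partiteWithHubs (fun v => P v.1) S).edgeSet.ncard := by
  classical
  set W : Finset (Σ i, α i) := {w : Σ i, α i | w.1 ∈ ({i | P i = P i₀} : Finset ι).erase i₀}
  set A : Finset ((Σ i, α i) × (Σ i, α i)) := {p | P p.1.1 < P p.2.1}
  have hSW : ∀ p ∈ S ×ˢ W, p.1.1 = i₀ ∧ p.2.1 ≠ i₀ ∧ P p.2.1 = P i₀ := fun p hp => by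
    obtain ⟨hp₁, hp₂⟩ := mem_product.1 hp
    simpa [W, hS _ hp₁] using hp₂
  have hA : ∀ p, p ∈ A ↔ P p.1.1 < P p.2.1 := by simp [A]
  have hdisj : Disjoint (S ×ˢ W) A := Finset.disjoint_left.2 fun p hp hpA => by
    obtain ⟨h₁, -, h₂⟩ := hSW p hp
    exact ((hA p).1 hpA).ne (by rw [h₁, h₂])
  simp only [← card_filter_sigma_fst_mem, mem_filter, mem_univ, true_and]
  rw [← card_product, ← card_filter_apply_lt_apply, ← card_union_of_disjoint hdisj]
  refine card_le_ncard_edgeSet (fun p hp => partiteWithHubs_adj.2 ?_) fun p hp hswap => ?_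
  · rcases mem_union.1 hp with hp | hp
    · obtain ⟨h₁, h₂, -⟩ := hSW p hp
      have hne : p.1.1 ≠ p.2.1 := h₁ ▸ h₂.symm
      exact ⟨hne, .inr ⟨fun h => hne (congrArg Sigma.fst h), .inl (mem_product.1 hp).1⟩⟩
    · have hlt := (hA p).1 hp
      exact ⟨fun h => hlt.ne (congrArg P h), .inl hlt.ne⟩
  · rcases mem_union.1 hp with hp | hp <;> rcases mem_union.1 hswap with hs | hs
    · exact (hSW p hp).2.1 (hSW _ hs).1
    · obtain ⟨h₁, -, h₂⟩ := hSW p hp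
      exact ((hA _).1 hs).ne (by simp [h₁, h₂])
    · obtain ⟨h₁, -, h₂⟩ := hSW _ hs
      exact ((hA p).1 hp).ne (h₂.trans (congrArg P h₁).symm)
    · exact ((hA p).1 hp).asymm ((hA _).1 hs)

end SimpleGraph

theorem conjecture_lower_bound_general
    (r t k : ℕ) (ht : 3 ≤ t) (hk : 1 ≤ k)
    (n : Fin r → ℕ) (hn : ∀ i, k ≤ n i)
    (P : Fin r → Fin (t - 1)) (hP : Function.Surjective P) :
    ∃ G : SimpleGraph (Σ i : Fin r, Fin (n i)),
      G ≤ SimpleGraph.completeMultipartiteGraph (fun i : Fin r => Fin (n i)) ∧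
      -- G contains no k pairwise vertex-disjoint copies of K_t
      (¬ ∃ S : Finset (Finset (Σ i : Fin r, Fin (n i))), S.card = k ∧
          (∀ T ∈ S, G.IsNClique t T) ∧
          (S : Set (Finset (Σ i : Fin r, Fin (n i)))).Pairwise Disjoint) ∧
      (k - 1) * (Finset.univ.sup fun j : Fin (t - 1) =>
          (∑ i ∈ Finset.univ.filter (fun i => P i = j), n i) -
            sInf (n '' {i | P i = j})) +
        (∑ j : Fin (t - 1), ∑ j' : Fin (t - 1),
          if j < j' then
            (∑ i ∈ Finset.univ.filter (fun i => P i = j), n i) *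
            (∑ i ∈ Finset.univ.filter (fun i => P i = j'), n i)
          else 0) ≤ G.edgeSet.ncard := by
  obtain ⟨j₀, -, hj₀⟩ := exists_mem_eq_sup univ ⟨⟨0, by omega⟩, mem_univ _⟩ fun j =>
    (∑ i ∈ univ.filter (fun i => P i = j), n i) - sInf (n '' {i | P i = j})
  obtain ⟨i₀, rfl : P i₀ = j₀, hi₀ : n i₀ = sInf (n '' {i | P i = P i₀})⟩ :=
    Nat.sInf_mem (Set.Nonempty.image n (hP j₀))
  obtain ⟨S, hS, hcard⟩ :=
    exists_subset_card_eq (s := {v : Σ i, Fin (n i) | v.1 ∈ ({i₀} : Finset (Fin r))}) (n := k - 1)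
      (by rw [card_filter_sigma_fst_mem, sum_singleton, Fintype.card_fin]; have := hn i₀; omega)
  refine ⟨(SimpleGraph.completeMultipartiteGraph _).partiteWithHubs (fun v => P v.1) S,
    SimpleGraph.partiteWithHubs_le, SimpleGraph.partiteWithHubs_not_exists_disjoint_isNClique
      (by rw [Fintype.card_fin]; omega) (by omega), ?_⟩
  have hedges := SimpleGraph.le_ncard_edgeSet_partiteWithHubs P fun v hv => by simpa using hS hv
  simp only [Fintype.card_fin, hcard] at hedges
  have hsplit := add_sum_erase {i | P i = P i₀} n (mem_filter.2 ⟨mem_univ i₀, rfl⟩)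
  rw [hj₀, ← hi₀]
  refine le_trans ?_ hedges
  gcongr
  omega

theorem conjecture_lower_bound
    (r t k : ℕ) (ht : 3 ≤ t) (hrt : t < r) (hk : 1 ≤ k)
    (n : Fin r → ℕ) (hn : ∀ i, k ≤ n i)
    (P : Fin r → Fin (t - 1)) (hP : Function.Surjective P) :
    ∃ G : SimpleGraph (Σ i : Fin r, Fin (n i)),
      G ≤ SimpleGraph.completeMultipartiteGraph (fun i : Fin r => Fin (n i)) ∧
      -- G contains no k pairwise vertex-disjoint copies of K_t
      (¬ ∃ S : Finset (Finset (Σ i : Fin r, Fin (n i))), S.card = k ∧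
          (∀ T ∈ S, G.IsNClique t T) ∧
          (S : Set (Finset (Σ i : Fin r, Fin (n i)))).Pairwise Disjoint) ∧
      (k - 1) * (Finset.univ.sup fun j : Fin (t - 1) =>
          (∑ i ∈ Finset.univ.filter (fun i => P i = j), n i) -
            sInf (n '' {i | P i = j})) +
        (∑ j : Fin (t - 1), ∑ j' : Fin (t - 1),
          if j < j' then
            (∑ i ∈ Finset.univ.filter (fun i => P i = j), n i) *
            (∑ i ∈ Finset.univ.filter (fun i => P i = j'), n i)
          else 0) ≤ G.edgeSet.ncard :=
  conjecture_lower_bound_general r t k ht hk n hn P hP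
end
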